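/- arXiv:1812.09871 — 10 statements merged into one kernel-verified Lean document; each statement's English description precedes it below -/
import Mathlib

section
/- Let n ≥ 1 and let f : ℝ₍₎₀ⁿ → ℝ₍₎₀ⁿ (the open positive orthant) be monotone and positively homogeneous. If there is no pair (I, J) of disjoint subsets of {1,…,n} such that I is a multiplicative MIN-dominion for f and J is a multiplicative MAX-dominion for f, then f has a positive eigenvector: there exist λ > 0 and u ∈ ℝ₍₎₀ⁿ with f(u) = λ·u. -/
/-- `Δ` is a multiplicative MIN-dominion for `f`: there is `C` with
`f_i(exp(t·e_{Δᶜ})) ≤ C` for all `i ∈ Δ` and `t ≥ 0`. -/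
def MultMinDominion (n : ℕ) (f : (Fin n → ℝ) → (Fin n → ℝ)) (Δ : Set (Fin n)) : Prop :=
  Δ.Nonempty ∧ ∃ C : ℝ, ∀ i ∈ Δ, ∀ t : ℝ, 0 ≤ t →
    f (fun j => Real.exp (Δᶜ.indicator (fun _ => t) j)) i ≤ C

/-- `Δ` is a multiplicative MAX-dominion for `f`: there is `c > 0` with
`f_i(exp(−t·e_{Δᶜ})) ≥ c` for all `i ∈ Δ` and `t ≥ 0`. -/
def MultMaxDominion (n : ℕ) (f : (Fin n → ℝ) → (Fin n → ℝ)) (Δ : Set (Fin n)) : Prop :=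
  Δ.Nonempty ∧ ∃ c : ℝ, 0 < c ∧ ∀ i ∈ Δ, ∀ t : ℝ, 0 ≤ t →
    c ≤ f (fun j => Real.exp (Δᶜ.indicator (fun _ => -t) j)) i

/-!
The substitution `F = log ∘ f ∘ exp` turns `f` into a topical map of `ℝⁿ`: monotone and
commuting with the addition of constants, hence `1`-Lipschitz for the sup norm. For `s > 1` the
map `s⁻¹ • F` is a contraction, and normalising its fixed point gives `F z_s = s • z_s + μ_s` with
`max z_s = 0` and `|μ_s| ≤ ‖F 0‖`. Let `s → 1⁺` along an ultrafilter. If `min z_s` stays bounded,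
a limit point `u` of the `z_s` satisfies `F u = u + λ`, so `exp u` is a positive eigenvector.
If `min z_s → -∞`, the coordinates on which `z_s` stays bounded below form a MAX-dominion, those
on which `z_s - min z_s` stays bounded above form a MIN-dominion (the dual statement, for
`x ↦ -F (-x)`), and the two sets are disjoint because `min z_s` is unbounded.
-/

open Filter Topology Set

variable {ι : Type*}

structure IsTopical (T : (ι → ℝ) → ι → ℝ) : Prop where
  monotone : Monotone T
  map_add_const : ∀ x (c : ℝ), T (x + fun _ => c) = T x + fun _ => c

def IsMinDominion (T : (ι → ℝ) → ι → ℝ) (Δ : Set ι) : Prop :=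
  Δ.Nonempty ∧ ∃ C : ℝ, ∀ i ∈ Δ, ∀ t : ℝ, 0 ≤ t → T (Δᶜ.indicator fun _ => t) i ≤ C

def IsMaxDominion (T : (ι → ℝ) → ι → ℝ) (Δ : Set ι) : Prop :=
  Δ.Nonempty ∧ ∃ c : ℝ, ∀ i ∈ Δ, ∀ t : ℝ, 0 ≤ t → c ≤ T (Δᶜ.indicator fun _ => -t) i

def negConj (T : (ι → ℝ) → ι → ℝ) (x : ι → ℝ) : ι → ℝ := -T (-x)

theorem IsTopical.negConj {T : (ι → ℝ) → ι → ℝ} (hT : IsTopical T) : IsTopical (negConj T) where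
  monotone _ _ h := neg_le_neg (hT.monotone (neg_le_neg h))
  map_add_const x c := by
    have : -(x + fun _ => c) = -x + fun _ => -c := by ext; simp [add_comm]
    ext i
    simp [_root_.negConj, this, hT.map_add_const]
    ring

theorem isMinDominion_of_isMaxDominion_negConj {T : (ι → ℝ) → ι → ℝ} {Δ : Set ι}
    (h : IsMaxDominion (negConj T) Δ) : IsMinDominion T Δ := by
  obtain ⟨hne, c, hc⟩ := h
  refine ⟨hne, -c, fun i hi t ht => ?_⟩
  have hind : -(Δᶜ.indicator fun _ => -t) = Δᶜ.indicator fun _ => t := by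
    ext j
    by_cases hj : j ∈ Δ <;> simp [hj]
  have := hc i hi t ht
  rw [negConj, hind, Pi.neg_apply] at this
  linarith

theorem Ultrafilter.exists_eventually_le_of_not_tendsto_atBot {α β : Type*} [LinearOrder β]
    {𝒰 : Ultrafilter α} {g : α → β} (h : ¬ Tendsto g 𝒰 atBot) : ∃ b, ∀ᶠ a in 𝒰, b ≤ g a := by
  rw [tendsto_atBot] at h
  push Not at h
  obtain ⟨b, hb⟩ := h
  exact ⟨b, hb.mono fun a ha => ha.le⟩

theorem isMaxDominion_setOf_not_tendsto_atBot [Finite ι] {T : (ι → ℝ) → ι → ℝ} (hT : Monotone T)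
    {α : Type*} (𝒰 : Ultrafilter α) {y : α → ι → ℝ} {K c : ℝ} (hK : 0 ≤ K)
    (hy : ∀ᶠ a in 𝒰, y a ≤ 0 ∧ (∃ j, y a j = 0) ∧ ∀ i, K * y a i + c ≤ T (y a) i) :
    IsMaxDominion T {i | ¬ Tendsto (fun a => y a i) 𝒰 atBot} := by
  set Δ := {i | ¬ Tendsto (fun a => y a i) 𝒰 atBot}
  have hbot : ∀ i ∉ Δ, Tendsto (fun a => y a i) 𝒰 atBot := fun i hi => not_not.1 hi
  obtain ⟨b, hb⟩ : ∃ b : ℝ, ∀ i ∈ Δ, ∀ᶠ a in 𝒰, b ≤ y a i := by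
    -- finitely many eventual lower bounds, combined along `atBot`
    refine (eventually_all.2 fun i => ?_ : ∀ᶠ b in atBot, ∀ i ∈ Δ, _).exists
    by_cases hi : i ∈ Δ
    · obtain ⟨b, hb⟩ := Ultrafilter.exists_eventually_le_of_not_tendsto_atBot hi
      filter_upwards [eventually_le_atBot b] with b' hb' _
      exact hb.mono fun a ha => hb'.trans ha
    · exact Eventually.of_forall fun _ h => absurd h hi
  refine ⟨?_, K * b + c, fun i hi t ht => ?_⟩
  · by_contra hΔ
    have hneg : ∀ᶠ a in 𝒰, ∀ i, y a i < 0 := eventually_all.2 fun i =>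
      (hbot i fun hi => hΔ ⟨i, hi⟩).eventually_lt_atBot 0
    obtain ⟨a, ⟨-, ⟨j, hj⟩, -⟩, ha⟩ := (hy.and hneg).exists
    exact (ha j).ne hj
  · have hfar : ∀ᶠ a in 𝒰, ∀ j ∉ Δ, y a j ≤ -t := eventually_all.2 fun j => by
      by_cases hj : j ∈ Δ
      · exact Eventually.of_forall fun _ h => absurd hj h
      · exact ((hbot j hj).eventually_le_atBot (-t)).mono fun a h _ => h
    obtain ⟨a, ⟨hy0, -, hyT⟩, hyb, hyfar⟩ := (hy.and ((hb i hi).and hfar)).exists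
    have hle : y a ≤ Δᶜ.indicator fun _ => -t := fun j => by
      by_cases hj : j ∈ Δ
      · simpa [hj] using hy0 j
      · simpa [hj] using hyfar j hj
    calc K * b + c ≤ K * y a i + c := by gcongr
      _ ≤ T (y a) i := hyT i
      _ ≤ _ := hT hle i

section Topical

variable [Fintype ι] {T : (ι → ℝ) → ι → ℝ}

theorem IsTopical.apply_le_add_dist (hT : IsTopical T) (x y : ι → ℝ) (i : ι) :
    T x i ≤ T y i + dist x y := by
  have hxy : x ≤ y + fun _ => dist x y := fun j => by
    have := (abs_le.1 (Real.dist_eq (x j) (y j) ▸ dist_le_pi_dist x y j)).2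
    simp only [Pi.add_apply]
    linarith
  simpa [hT.map_add_const] using hT.monotone hxy i

theorem IsTopical.lipschitzWith (hT : IsTopical T) : LipschitzWith 1 T :=
  LipschitzWith.of_dist_le_mul fun x y => by
    rw [NNReal.coe_one, one_mul, dist_pi_le_iff dist_nonneg]
    intro i
    rw [Real.dist_eq, abs_sub_le_iff]
    constructor
    · linarith [hT.apply_le_add_dist x y i]
    · linarith [hT.apply_le_add_dist y x i, dist_comm x y]

theorem IsTopical.exists_eq_smul (hT : IsTopical T) {s : ℝ} (hs : 1 < s) :
    ∃ x, T x = s • x := by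
  have hs0 : s ≠ 0 := by positivity
  have hcontr : ContractingWith (‖s⁻¹‖₊ * 1) fun x => s⁻¹ • T x := by
    refine ⟨?_, (lipschitzWith_smul s⁻¹).comp hT.lipschitzWith⟩
    rw [mul_one, ← NNReal.coe_lt_coe, coe_nnnorm, norm_inv, Real.norm_eq_abs,
      abs_of_pos (by positivity), NNReal.coe_one]
    exact inv_lt_one_of_one_lt₀ hs
  obtain ⟨x, hx, -⟩ := hcontr.exists_fixedPoint 0 (edist_ne_top _ _)
  exact ⟨x, (inv_smul_eq_iff₀ hs0).1 hx⟩

theorem IsTopical.abs_le_norm_apply_zero (hT : IsTopical T) {z : ι → ℝ} {s μ : ℝ} (hs : 1 ≤ s)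
    (hz : z ≤ 0) {j : ι} (hj : z j = 0) (h : T z = s • z + fun _ => μ) : |μ| ≤ ‖T 0‖ := by
  have : Nonempty ι := ⟨j⟩
  obtain ⟨i, hi⟩ := Finite.exists_min z
  have hTz : ∀ k, T z k = s * z k + μ := fun k => by simp [h]
  have hupper : T z j ≤ T 0 j := hT.monotone hz j
  have hlower : T (0 + fun _ => z i) i ≤ T z i := hT.monotone (fun k => by simpa using hi k) i
  rw [hT.map_add_const] at hlower
  have hnorm_j := abs_le.1 (Real.norm_eq_abs _ ▸ norm_le_pi_norm (T 0) j)
  have hnorm_i := abs_le.1 (Real.norm_eq_abs _ ▸ norm_le_pi_norm (T 0) i)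
  have hzi : z i ≤ 0 := hz i
  simp only [hTz, hj, Pi.add_apply] at hupper hlower
  rw [abs_le]
  constructor <;> nlinarith

theorem IsTopical.exists_normalized_eigen (hT : IsTopical T) [Nonempty ι] {s : ℝ} (hs : 1 < s) :
    ∃ z : ι → ℝ, ∃ μ : ℝ, z ≤ 0 ∧ (∃ j, z j = 0) ∧ |μ| ≤ ‖T 0‖ ∧ T z = s • z + fun _ => μ := by
  obtain ⟨x, hx⟩ := hT.exists_eq_smul hs
  obtain ⟨j, hj⟩ := Finite.exists_max x
  have hz : T (x + fun _ => -x j) = s • (x + fun _ => -x j) + fun _ => (s - 1) * x j := by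
    rw [hT.map_add_const, hx]
    ext i
    simp only [Pi.add_apply, Pi.smul_apply, smul_eq_mul]
    ring
  have hz0 : (x + fun _ => -x j) ≤ 0 := fun i => by simpa using hj i
  have hzj : (x + fun _ => -x j : ι → ℝ) j = 0 := by simp
  exact ⟨_, _, hz0, ⟨j, hzj⟩, hT.abs_le_norm_apply_zero hs.le hz0 hzj hz, hz⟩

theorem IsTopical.exists_eigen_of_tendsto (hT : IsTopical T) [Nonempty ι] {α : Type*}
    {l : Filter α} [l.NeBot] {s : α → ℝ} {z : α → ι → ℝ} {μ : α → ℝ} {u : ι → ℝ}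
    (hs : Tendsto s l (𝓝 1)) (hz : Tendsto z l (𝓝 u))
    (h : ∀ᶠ a in l, T (z a) = s a • z a + fun _ => μ a) :
    ∃ lam : ℝ, T u = u + fun _ => lam := by
  have hμ : ∀ i, Tendsto μ l (𝓝 (T u i - u i)) := fun i => by
    have hTz := tendsto_pi_nhds.1 ((hT.lipschitzWith.continuous.tendsto u).comp hz) i
    have := hTz.sub (hs.mul (tendsto_pi_nhds.1 hz i))
    rw [one_mul] at this
    refine this.congr' (h.mono fun a ha => ?_)
    simp [ha]
  let j := Classical.arbitrary ι
  refine ⟨T u j - u j, funext fun i => ?_⟩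
  have := tendsto_nhds_unique (hμ i) (hμ j)
  simp only [Pi.add_apply]
  linarith

theorem IsTopical.exists_dominions_of_tendsto_iInf_atBot (hT : IsTopical T) [Nonempty ι]
    {α : Type*} (𝒰 : Ultrafilter α) {s : α → ℝ} {z : α → ι → ℝ} {μ : α → ℝ}
    (hs : ∀ᶠ a in 𝒰, 1 ≤ s a ∧ s a ≤ 2)
    (hz : ∀ᶠ a in 𝒰, z a ≤ 0 ∧ (∃ j, z a j = 0) ∧ |μ a| ≤ ‖T 0‖ ∧
      T (z a) = s a • z a + fun _ => μ a)
    (hm : Tendsto (fun a => ⨅ i, z a i) 𝒰 atBot) :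
    ∃ I J : Set ι, Disjoint I J ∧ IsMinDominion T I ∧ IsMaxDominion T J := by
  set m := fun a => ⨅ i, z a i
  have hmz : ∀ a i, m a ≤ z a i := fun a i => ciInf_le (Finite.bddBelow_range _) i
  refine ⟨{i | ¬ Tendsto (fun a => m a - z a i) 𝒰 atBot},
    {i | ¬ Tendsto (fun a => z a i) 𝒰 atBot}, Set.disjoint_left.2 fun i hI hJ => ?_, ?_, ?_⟩
  · obtain ⟨b, hb⟩ := Ultrafilter.exists_eventually_le_of_not_tendsto_atBot hI
    obtain ⟨b', hb'⟩ := Ultrafilter.exists_eventually_le_of_not_tendsto_atBot hJ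
    obtain ⟨a, hba, hba', hma⟩ := (hb.and (hb'.and (hm.eventually_lt_atBot (b + b')))).exists
    linarith
  · refine isMinDominion_of_isMaxDominion_negConj
      (isMaxDominion_setOf_not_tendsto_atBot hT.negConj.monotone 𝒰 (y := fun a i => m a - z a i)
        (K := 2) (c := -‖T 0‖) zero_le_two ((hs.and hz).mono
          fun a ⟨⟨hs1, hs2⟩, _, ⟨j, hj⟩, hμ, hzT⟩ =>
            ⟨fun i => by simpa using hmz a i, ?_, fun i => ?_⟩))
    · obtain ⟨k, hk⟩ := exists_eq_ciInf_of_finite (f := z a)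
      exact ⟨k, by simp [m, hk]⟩
    · have hshift : -(fun i => m a - z a i) = z a + fun _ => -m a := by
        ext
        simp only [Pi.neg_apply, Pi.add_apply]
        ring
      have hm0 : m a ≤ 0 := hj ▸ hmz a j
      have hzi := hmz a i
      have hμa := (abs_le.1 hμ).2
      simp only [_root_.negConj, hshift, hT.map_add_const, hzT, Pi.neg_apply, Pi.add_apply,
        Pi.smul_apply, smul_eq_mul]
      linarith [mul_nonneg (sub_nonneg.2 hs2) (sub_nonneg.2 hzi),
        mul_nonpos_of_nonneg_of_nonpos (sub_nonneg.2 hs1) hm0]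
  · exact isMaxDominion_setOf_not_tendsto_atBot hT.monotone 𝒰 (K := 2) (c := -‖T 0‖) zero_le_two
      ((hs.and hz).mono fun a ⟨⟨hs1, hs2⟩, hz0, hzj, hμ, hzT⟩ => ⟨hz0, hzj, fun i => by
        have hzi : z a i ≤ 0 := hz0 i
        have hμa := (abs_le.1 hμ).1
        simp only [hzT, Pi.add_apply, Pi.smul_apply, smul_eq_mul]
        linarith [mul_nonpos_of_nonneg_of_nonpos (sub_nonneg.2 hs2) hzi]⟩)

theorem IsTopical.exists_eigen_or_dominions (hT : IsTopical T) [Nonempty ι] :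
    (∃ u : ι → ℝ, ∃ lam : ℝ, T u = u + fun _ => lam) ∨
      ∃ I J : Set ι, Disjoint I J ∧ IsMinDominion T I ∧ IsMaxDominion T J := by
  choose! z μ hz using fun s (hs : 1 < s) => hT.exists_normalized_eigen hs
  let 𝒰 := Ultrafilter.of (𝓝[>] (1 : ℝ))
  have h𝒰 : (𝒰 : Filter ℝ) ≤ 𝓝[>] 1 := Ultrafilter.of_le _
  have hs : ∀ᶠ s : ℝ in 𝒰, 1 < s ∧ s ≤ 2 :=
    h𝒰 (inter_mem_nhdsWithin _ (Iic_mem_nhds one_lt_two))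
  by_cases hm : Tendsto (fun s => ⨅ i, z s i) 𝒰 atBot
  · exact .inr (hT.exists_dominions_of_tendsto_iInf_atBot 𝒰 (hs.mono fun s h => ⟨h.1.le, h.2⟩)
      (hs.mono fun s h => hz s h.1) hm)
  · obtain ⟨b, hb⟩ := Ultrafilter.exists_eventually_le_of_not_tendsto_atBot hm
    have hK : ∀ᶠ s in 𝒰, z s ∈ Icc (fun _ => b : ι → ℝ) 0 := (hb.and hs).mono fun s ⟨hbs, hs1, _⟩ =>
      ⟨fun i => hbs.trans (ciInf_le (Finite.bddBelow_range _) i), (hz s hs1).1⟩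
    obtain ⟨u, -, hu⟩ := isCompact_Icc.ultrafilter_le_nhds' (𝒰.map z) hK
    exact .inl ⟨u, hT.exists_eigen_of_tendsto (h𝒰.trans nhdsWithin_le_nhds) hu
      (hs.mono fun s hs => (hz s hs.1).2.2.2)⟩

end Topical

section LogConj

noncomputable def logConj (f : (ι → ℝ) → ι → ℝ) (x : ι → ℝ) : ι → ℝ :=
  fun i => Real.log (f (fun j => Real.exp (x j)) i)

variable {f : (ι → ℝ) → ι → ℝ}

theorem exp_logConj (hpos : ∀ x, (∀ i, 0 < x i) → ∀ i, 0 < f x i) (x : ι → ℝ) (i : ι) :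
    Real.exp (logConj f x i) = f (fun j => Real.exp (x j)) i :=
  Real.exp_log (hpos _ (fun _ => Real.exp_pos _) i)

theorem isTopical_logConj (hpos : ∀ x, (∀ i, 0 < x i) → ∀ i, 0 < f x i)
    (hmono : ∀ x y, (∀ i, 0 < x i) → (∀ i, 0 < y i) → x ≤ y → f x ≤ f y)
    (hhom : ∀ t : ℝ, 0 < t → ∀ x, (∀ i, 0 < x i) → f (t • x) = t • f x) :
    IsTopical (logConj f) where
  monotone x y h i :=
    Real.log_le_log (hpos _ (fun _ => Real.exp_pos _) i)
      (hmono _ _ (fun _ => Real.exp_pos _) (fun _ => Real.exp_pos _)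
        (fun j => Real.exp_le_exp.2 (h j)) i)
  map_add_const x c := by
    have hexp : (fun j => Real.exp ((x + fun _ => c : ι → ℝ) j)) =
        Real.exp c • fun j => Real.exp (x j) := by
      ext j
      simp [Real.exp_add, mul_comm]
    ext i
    rw [logConj, hexp, hhom _ (Real.exp_pos c) _ (fun _ => Real.exp_pos _), Pi.smul_apply,
      smul_eq_mul, Real.log_mul (Real.exp_pos c).ne' (hpos _ (fun _ => Real.exp_pos _) i).ne',
      Real.log_exp, Pi.add_apply, add_comm]
    rfl

end LogConj

theorem IsMinDominion.multMinDominion {n : ℕ} {f : (Fin n → ℝ) → Fin n → ℝ} {Δ : Set (Fin n)}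
    (hpos : ∀ x, (∀ i, 0 < x i) → ∀ i, 0 < f x i) (h : IsMinDominion (logConj f) Δ) :
    MultMinDominion n f Δ := by
  obtain ⟨hne, C, hC⟩ := h
  exact ⟨hne, Real.exp C, fun i hi t ht =>
    exp_logConj hpos _ i ▸ Real.exp_le_exp.2 (hC i hi t ht)⟩

theorem IsMaxDominion.multMaxDominion {n : ℕ} {f : (Fin n → ℝ) → Fin n → ℝ} {Δ : Set (Fin n)}
    (hpos : ∀ x, (∀ i, 0 < x i) → ∀ i, 0 < f x i) (h : IsMaxDominion (logConj f) Δ) :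
    MultMaxDominion n f Δ := by
  obtain ⟨hne, c, hc⟩ := h
  exact ⟨hne, Real.exp c, Real.exp_pos c, fun i hi t ht =>
    exp_logConj hpos _ i ▸ Real.exp_le_exp.2 (hc i hi t ht)⟩

theorem stmt0 (n : ℕ) (hn : 1 ≤ n)
    (f : (Fin n → ℝ) → (Fin n → ℝ))
    (hpos : ∀ x, (∀ i, 0 < x i) → ∀ i, 0 < f x i)
    (hmono : ∀ x y, (∀ i, 0 < x i) → (∀ i, 0 < y i) → x ≤ y → f x ≤ f y)
    (hhom : ∀ t : ℝ, 0 < t → ∀ x, (∀ i, 0 < x i) → f (t • x) = t • f x)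
    (hdom : ¬ ∃ I J : Set (Fin n),
      Disjoint I J ∧ MultMinDominion n f I ∧ MultMaxDominion n f J) :
    ∃ lam : ℝ, 0 < lam ∧ ∃ u : Fin n → ℝ, (∀ i, 0 < u i) ∧ f u = lam • u := by
  have : Nonempty (Fin n) := ⟨⟨0, hn⟩⟩
  rcases (isTopical_logConj hpos hmono hhom).exists_eigen_or_dominions with
    ⟨u, lam, hu⟩ | ⟨I, J, hIJ, hI, hJ⟩
  · refine ⟨Real.exp lam, Real.exp_pos lam, fun i => Real.exp (u i), fun _ => Real.exp_pos _, ?_⟩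
    ext i
    rw [← exp_logConj hpos, hu, Pi.add_apply, Real.exp_add, Pi.smul_apply, smul_eq_mul, mul_comm]
  · exact absurd ⟨I, J, hIJ, hI.multMinDominion hpos, hJ.multMaxDominion hpos⟩ hdom
end

section
/- Let n ≥ 1 and let T : ℝⁿ → ℝⁿ be monotone and additively homogeneous. If there is no pair (I, J) of disjoint subsets of {1,…,n} such that I is a MIN-dominion for T and J is a MAX-dominion for T, then for all real numbers α ≤ β the additive slice space A_α^β(T) = {x ∈ ℝⁿ : α·e + x ≤ T(x) ≤ β·e + x} is bounded in Hilbert's seminorm, i.e., sup{‖x‖_H : x ∈ A_α^β(T)} < ∞. -/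
/-- `T` is additively homogeneous: `T(x + c·e) = T(x) + c·e`. -/
def AddHomog (n : ℕ) (T : (Fin n → ℝ) → (Fin n → ℝ)) : Prop :=
  ∀ (x : Fin n → ℝ) (c : ℝ), T (fun i => x i + c) = fun i => T x i + c

/-- `Δ` is a MIN-dominion for `T`: there is `β` with `T_i(t·e_{Δᶜ}) ≤ β`
for all `i ∈ Δ` and all `t ≥ 0`. -/
def MinDominion (n : ℕ) (T : (Fin n → ℝ) → (Fin n → ℝ)) (Δ : Set (Fin n)) : Prop :=
  Δ.Nonempty ∧ ∃ β : ℝ, ∀ i ∈ Δ, ∀ t : ℝ, 0 ≤ t →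
    T (Δᶜ.indicator fun _ => t) i ≤ β

/-- `Δ` is a MAX-dominion for `T`: there is `α` with `T_i(−t·e_{Δᶜ}) ≥ α`
for all `i ∈ Δ` and all `t ≥ 0`. -/
def MaxDominion (n : ℕ) (T : (Fin n → ℝ) → (Fin n → ℝ)) (Δ : Set (Fin n)) : Prop :=
  Δ.Nonempty ∧ ∃ α : ℝ, ∀ i ∈ Δ, ∀ t : ℝ, 0 ≤ t →
    α ≤ T (Δᶜ.indicator fun _ => -t) i

/-- Hilbert's seminorm `‖x‖_H = max_i x_i − min_i x_i`. -/
noncomputable def hilbertSeminorm (n : ℕ) (x : Fin n → ℝ) : ℝ :=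
  (⨆ i, x i) - ⨅ i, x i

/-- The additive slice space `A_α^β(T) = {x : α·e + x ≤ T(x) ≤ β·e + x}`. -/
def addSliceSpace (n : ℕ) (T : (Fin n → ℝ) → (Fin n → ℝ)) (α β : ℝ) : Set (Fin n → ℝ) :=
  {x | ∀ i, α + x i ≤ T x i ∧ T x i ≤ β + x i}

/-!
If the slice space were unbounded, pick `x m` in it with `‖x m‖_H > m` and split
`‖x m‖_H = (x m - min x m) + (max x m - x m)` coordinatewise into two nonnegative parts `u m`
and `w m`, both still (after the shift) controlled by the slice inequalities. Along a
nonprincipal ultrafilter every coordinate of `u` either stays bounded or tends to `∞`; the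
bounded ones form a MIN-dominion, because `T` is monotone and `u m` dominates `t · e_{Iᶜ}` for
large `m`. The same argument for the conjugate map `x ↦ -T(-x)` and `w` yields a MAX-dominion,
and the two are disjoint since `u m + w m = ‖x m‖_H → ∞`.
-/

open Filter

lemma Ultrafilter.eventually_lt_of_not_isBoundedUnder {α β : Type*} [LinearOrder β]
    {𝒰 : Ultrafilter α} {f : α → β} (h : ¬ IsBoundedUnder (· ≤ ·) (𝒰 : Filter α) f) (b : β) :
    ∀ᶠ a in 𝒰, b < f a := by
  have : ¬ ∀ᶠ a in 𝒰, f a ≤ b := fun hb => h (isBoundedUnder_of_eventually_le hb)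
  simpa only [not_le] using Ultrafilter.eventually_not.2 this

section BoundedCoords

variable {α ι : Type*}

def boundedCoords (𝒰 : Ultrafilter α) (u : α → ι → ℝ) : Set ι :=
  {i | IsBoundedUnder (· ≤ ·) (𝒰 : Filter α) fun a => u a i}

variable {𝒰 : Ultrafilter α} {u : α → ι → ℝ}

lemma eventually_lt_of_notMem_boundedCoords {i : ι} (hi : i ∉ boundedCoords 𝒰 u) (t : ℝ) :
    ∀ᶠ a in 𝒰, t < u a i :=
  Ultrafilter.eventually_lt_of_not_isBoundedUnder hi t

lemma exists_eventually_le_of_mem_boundedCoords [Finite ι] :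
    ∃ C : ℝ, ∀ᶠ a in 𝒰, ∀ i ∈ boundedCoords 𝒰 u, u a i ≤ C := by
  have hbound : ∀ i, ∃ C : ℝ, i ∈ boundedCoords 𝒰 u → ∀ᶠ a in 𝒰, u a i ≤ C := by
    intro i
    by_cases hi : i ∈ boundedCoords 𝒰 u
    · obtain ⟨C, hC⟩ := hi
      exact ⟨C, fun _ => hC⟩
    · exact ⟨0, fun h => absurd h hi⟩
  choose C hC using hbound
  obtain ⟨M, hM⟩ := Finite.bddAbove_range C
  refine ⟨M, eventually_all.2 fun i => ?_⟩
  by_cases hi : i ∈ boundedCoords 𝒰 u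
  · exact (hC i hi).mono fun a ha _ => ha.trans (hM ⟨i, rfl⟩)
  · exact .of_forall fun _ h => absurd h hi

lemma boundedCoords_nonempty [Finite ι] {c : ℝ} (h : ∀ a, ∃ i, u a i ≤ c) :
    (boundedCoords 𝒰 u).Nonempty := by
  by_contra hempty
  have hlarge : ∀ᶠ a in 𝒰, ∀ i, c < u a i :=
    eventually_all.2 fun i => eventually_lt_of_notMem_boundedCoords (fun hi => hempty ⟨i, hi⟩) c
  obtain ⟨a, ha⟩ := hlarge.exists
  obtain ⟨i, hi⟩ := h a
  exact (ha i).not_ge hi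

lemma disjoint_boundedCoords {w : α → ι → ℝ} {s : α → ℝ} (hs : Tendsto s 𝒰 atTop)
    (hsum : ∀ a i, u a i + w a i = s a) :
    Disjoint (boundedCoords 𝒰 u) (boundedCoords 𝒰 w) := by
  refine Set.disjoint_left.2 fun i hu hw => not_isBoundedUnder_of_tendsto_atTop hs ?_
  simpa only [Pi.add_def, hsum] using isBoundedUnder_le_add hu hw

end BoundedCoords

section Dominions

variable {n : ℕ} {T : (Fin n → ℝ) → (Fin n → ℝ)}

lemma minDominion_boundedCoords {α : Type*} (hT : Monotone T) (𝒰 : Ultrafilter α)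
    {u : α → Fin n → ℝ} {β c : ℝ} (hu : ∀ a, 0 ≤ u a) (hlow : ∀ a, ∃ i, u a i ≤ c)
    (hTu : ∀ a i, T (u a) i ≤ β + u a i) :
    MinDominion n T (boundedCoords 𝒰 u) := by
  set I := boundedCoords 𝒰 u
  obtain ⟨C, hC⟩ := exists_eventually_le_of_mem_boundedCoords (𝒰 := 𝒰) (u := u)
  refine ⟨boundedCoords_nonempty hlow, β + C, fun i hi t _ => ?_⟩
  have hlarge : ∀ᶠ a in 𝒰, ∀ j ∉ I, t ≤ u a j :=
    eventually_all.2 fun j => by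
      by_cases hj : j ∈ I
      · exact .of_forall fun _ h => absurd hj h
      · exact (eventually_lt_of_notMem_boundedCoords hj t).mono fun _ h _ => h.le
  obtain ⟨a, haC, hat⟩ := (hC.and hlarge).exists
  have hle : Iᶜ.indicator (fun _ => t) ≤ u a := by
    intro j
    by_cases hj : j ∈ I
    · simpa [Set.indicator_of_notMem, hj] using hu a j
    · simpa [hj] using hat j hj
  calc T (Iᶜ.indicator fun _ => t) i ≤ T (u a) i := hT hle i
    _ ≤ β + u a i := hTu a i
    _ ≤ β + C := by linarith [haC i hi]

lemma monotone_neg_comp_neg (hT : Monotone T) : Monotone fun x => -T (-x) :=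
  (hT.comp_antitone fun _ _ h => neg_le_neg h).neg

lemma maxDominion_of_minDominion_neg {J : Set (Fin n)}
    (h : MinDominion n (fun x => -T (-x)) J) : MaxDominion n T J := by
  obtain ⟨hne, β, hβ⟩ := h
  refine ⟨hne, -β, fun i hi t ht => ?_⟩
  have hneg : -(Jᶜ.indicator fun _ => t) = Jᶜ.indicator fun _ => -t :=
    (Set.indicator_neg' _ _).symm
  have := hβ i hi t ht
  simp only [hneg, Pi.neg_apply] at this
  linarith

end Dominions

lemma addSliceSpace_sub_const {n : ℕ} {T : (Fin n → ℝ) → (Fin n → ℝ)} (hT : AddHomog n T)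
    {α β : ℝ} {x : Fin n → ℝ} (hx : x ∈ addSliceSpace n T α β) (c : ℝ) :
    (fun i => x i - c) ∈ addSliceSpace n T α β := by
  intro i
  simp only [sub_eq_add_neg, hT x (-c)]
  constructor <;> linarith [hx i]

theorem stmt1 (n : ℕ) (hn : 1 ≤ n)
    (T : (Fin n → ℝ) → (Fin n → ℝ))
    (hmono : Monotone T) (hhom : AddHomog n T)
    (hdom : ¬ ∃ I J : Set (Fin n),
      Disjoint I J ∧ MinDominion n T I ∧ MaxDominion n T J) :
    ∀ α β : ℝ, α ≤ β →
      ∃ M : ℝ, ∀ x ∈ addSliceSpace n T α β, hilbertSeminorm n x ≤ M := by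
  intro α β _
  have : Nonempty (Fin n) := Fin.pos_iff_nonempty.mp hn
  by_contra! hunbdd
  choose x hxA hxH using fun m : ℕ => hunbdd m
  let 𝒰 : Ultrafilter ℕ := Ultrafilter.of atTop
  let u : ℕ → Fin n → ℝ := fun m i => x m i - ⨅ j, x m j
  let w : ℕ → Fin n → ℝ := fun m i => (⨆ j, x m j) - x m i
  have hs : Tendsto (fun m => hilbertSeminorm n (x m)) 𝒰 atTop :=
    tendsto_atTop_mono (fun m => (hxH m).le)
      (tendsto_natCast_atTop_atTop.mono_left (Ultrafilter.of_le _))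
  have hu : ∀ m, 0 ≤ u m := fun m i => sub_nonneg.2 (ciInf_le (Finite.bddBelow_range _) i)
  have hw : ∀ m, 0 ≤ w m := fun m i => sub_nonneg.2 (le_ciSup (Finite.bddAbove_range _) i)
  have hu_low : ∀ m, ∃ i, u m i ≤ 0 := fun m =>
    (exists_eq_ciInf_of_finite (f := x m)).imp fun i hi => by simp [u, hi]
  have hw_low : ∀ m, ∃ i, w m i ≤ 0 := fun m =>
    (exists_eq_ciSup_of_finite (f := x m)).imp fun i hi => by simp [w, hi]
  have hTu : ∀ m i, T (u m) i ≤ β + u m i := fun m i =>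
    (addSliceSpace_sub_const hhom (hxA m) _ i).2
  have hTw : ∀ m i, -T (-w m) i ≤ -α + w m i := fun m i => by
    have hneg : -w m = fun i => x m i - ⨆ j, x m j := by ext; simp [w]
    rw [hneg]
    linarith [(addSliceSpace_sub_const hhom (hxA m) (⨆ j, x m j) i).1]
  exact hdom ⟨_, _, disjoint_boundedCoords hs fun m i => by simp only [u, w, hilbertSeminorm]; ring,
    minDominion_boundedCoords hmono 𝒰 hu hu_low hTu,
    maxDominion_of_minDominion_neg <|
      minDominion_boundedCoords (monotone_neg_comp_neg hmono) 𝒰 hw hw_low hTw⟩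
end

section
/- Let n ≥ 1 and let T : ℝⁿ → ℝⁿ be monotone and additively homogeneous. If there exist real numbers α ≤ β such that the additive slice space A_α^β(T) = {x ∈ ℝⁿ : α·e + x ≤ T(x) ≤ β·e + x} is unbounded in Hilbert's seminorm (i.e., sup{‖x‖_H : x ∈ A_α^β(T)} = ∞), then there exist disjoint nonempty sets I, J ⊆ {1,…,n} such that I is a MIN-dominion for T and J is a MAX-dominion for T. -/
theorem stmt2 (n : ℕ) (hn : 1 ≤ n)
    (T : (Fin n → ℝ) → (Fin n → ℝ))
    (hmono : Monotone T) (hhom : AddHomog n T)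
    (hunb : ∃ α β : ℝ, α ≤ β ∧
      ¬ ∃ M : ℝ, ∀ x ∈ addSliceSpace n T α β, hilbertSeminorm n x ≤ M) :
    ∃ I J : Set (Fin n), Disjoint I J ∧ MinDominion n T I ∧ MaxDominion n T J := by
  classical
  obtain ⟨α, β, hab, hM⟩ := hunb
  haveI : Nonempty (Fin n) := ⟨⟨0, hn⟩⟩
  set A := addSliceSpace n T α β with hAdef
  -- the slice space is invariant under adding constants
  have shiftA : ∀ x ∈ A, ∀ c : ℝ, (fun i => x i + c) ∈ A := by
    intro x hx c i
    have h2 : T (fun i => x i + c) i = T x i + c := by rw [hhom x c]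
    have h1 := hx i
    constructor
    · show α + (x i + c) ≤ T (fun i => x i + c) i
      rw [h2]; linarith [h1.1]
    · show T (fun i => x i + c) i ≤ β + (x i + c)
      rw [h2]; linarith [h1.2]
  push_neg at hM
  -- a sequence of normalized points with unbounded max
  have seq : ∀ m : ℕ, ∃ (x : Fin n → ℝ) (i₀ i₁ : Fin n),
      x ∈ A ∧ (∀ i, 0 ≤ x i) ∧ x i₀ = 0 ∧ (∀ j, x j ≤ x i₁) ∧ (m : ℝ) ≤ x i₁ := by
    intro m
    obtain ⟨x, hxA, hx⟩ := hM (m : ℝ)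
    obtain ⟨i₁, hi₁⟩ := Finite.exists_max x
    obtain ⟨i₀, hi₀⟩ := Finite.exists_min x
    have hsup : (⨆ i, x i) = x i₁ :=
      le_antisymm (ciSup_le hi₁) (le_ciSup (Set.finite_range x).bddAbove i₁)
    have hinf : (⨅ i, x i) = x i₀ :=
      le_antisymm (ciInf_le (Set.finite_range x).bddBelow i₀) (le_ciInf hi₀)
    have hms : (m : ℝ) < x i₁ - x i₀ := by
      unfold hilbertSeminorm at hx; rw [hsup, hinf] at hx; linarith
    refine ⟨fun i => x i + (-(x i₀)), i₀, i₁, shiftA x hxA _, ?_, by ring, ?_, ?_⟩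
    · intro i; have := hi₀ i; simp only []; linarith
    · intro j; have := hi₁ j; simp only []; linarith
    · simp only []; linarith
  choose X z w hXA hXpos hXz hXw hXm using seq
  -- ultrafilter extending atTop
  let U : Ultrafilter ℕ := Ultrafilter.of Filter.atTop
  have hU : (U : Filter ℕ) ≤ Filter.atTop := Ultrafilter.of_le _
  set Mx : ℕ → ℝ := fun m => X m (w m) with hMxdef
  set I : Set (Fin n) := {i | ∃ C : ℝ, {m | X m i ≤ C} ∈ U} with hIdef
  set J : Set (Fin n) := {i | ∃ C : ℝ, {m | Mx m - X m i ≤ C} ∈ U} with hJdef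
  -- fibers of maps to Fin n
  have exists_fiber : ∀ g : ℕ → Fin n, ∃ i, {m | g m = i} ∈ U := by
    intro g
    by_contra h
    push_neg at h
    have h2 : ∀ i, {m | g m ≠ i} ∈ U := by
      intro i
      have := (Ultrafilter.compl_mem_iff_notMem (s := {m | g m = i})).mpr (h i)
      simpa [Set.compl_setOf] using this
    have h3 : (⋂ i, {m | g m ≠ i}) ∈ U := (Filter.iInter_mem).mpr h2
    obtain ⟨m, hm⟩ := Ultrafilter.nonempty_of_mem h3
    exact (Set.mem_iInter.mp hm (g m)) rfl
  have hIne : I.Nonempty := by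
    obtain ⟨i, hi⟩ := exists_fiber z
    refine ⟨i, 0, ?_⟩
    refine Filter.mem_of_superset hi ?_
    intro m hm
    simp only [Set.mem_setOf_eq] at hm ⊢
    rw [← hm, hXz m]
  have hJne : J.Nonempty := by
    obtain ⟨i, hi⟩ := exists_fiber w
    refine ⟨i, 0, ?_⟩
    refine Filter.mem_of_superset hi ?_
    intro m hm
    simp only [Set.mem_setOf_eq] at hm ⊢
    rw [← hm, hMxdef]
    simp
  have hDisj : Disjoint I J := by
    rw [Set.disjoint_left]
    rintro i ⟨C, hC⟩ ⟨D, hD⟩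
    obtain ⟨N, hN⟩ := exists_nat_gt (C + D)
    have hN' : {m : ℕ | C + D < (m : ℝ)} ∈ U := by
      refine Filter.le_def.mp hU _ (Filter.mem_atTop_sets.mpr ⟨N, fun b hb => ?_⟩)
      have : (N : ℝ) ≤ (b : ℝ) := by exact_mod_cast hb
      exact lt_of_lt_of_le hN this
    obtain ⟨m, hm⟩ := Ultrafilter.nonempty_of_mem
      (Filter.inter_mem (Filter.inter_mem hC hD) hN')
    obtain ⟨⟨h1, h2⟩, h3⟩ := hm
    simp only [Set.mem_setOf_eq] at h1 h2 h3
    have h4 := hXm m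
    linarith
  -- coordinates not in I are eventually large
  have hnotI : ∀ i, i ∉ I → ∀ C : ℝ, {m | C < X m i} ∈ U := by
    intro i hi C
    have h1 : {m | X m i ≤ C} ∉ U := fun h => hi ⟨C, h⟩
    have := (Ultrafilter.compl_mem_iff_notMem (s := {m | X m i ≤ C})).mpr h1
    simpa [Set.compl_setOf, not_le] using this
  have hnotJ : ∀ i, i ∉ J → ∀ C : ℝ, {m | C < Mx m - X m i} ∈ U := by
    intro i hi C
    have h1 : {m | Mx m - X m i ≤ C} ∉ U := fun h => hi ⟨C, h⟩
    have h2 := (Ultrafilter.compl_mem_iff_notMem (s := {m | Mx m - X m i ≤ C})).mpr h1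
    have h3 : {m | Mx m - X m i ≤ C}ᶜ = {m | C < Mx m - X m i} := by
      ext m
      simp only [Set.mem_compl_iff, Set.mem_setOf_eq, not_le]
    rwa [h3] at h2
  -- uniform bounds on I and J
  let Cf : Fin n → ℝ := fun i =>
    if h : ∃ C : ℝ, {m | X m i ≤ C} ∈ U then Classical.choose h else 0
  have hCf : ∀ i ∈ I, {m | X m i ≤ Cf i} ∈ U := by
    intro i hi
    have h : ∃ C : ℝ, {m | X m i ≤ C} ∈ U := hi
    simpa only [Cf, dif_pos h] using Classical.choose_spec h
  let Df : Fin n → ℝ := fun i =>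
    if h : ∃ C : ℝ, {m | Mx m - X m i ≤ C} ∈ U then Classical.choose h else 0
  have hDf : ∀ i ∈ J, {m | Mx m - X m i ≤ Df i} ∈ U := by
    intro i hi
    have h : ∃ C : ℝ, {m | Mx m - X m i ≤ C} ∈ U := hi
    simpa only [Df, dif_pos h] using Classical.choose_spec h
  let CI : ℝ := Finset.univ.sup' Finset.univ_nonempty Cf
  have hCI : ∀ i, Cf i ≤ CI := fun i => Finset.le_sup' Cf (Finset.mem_univ i)
  let DJ : ℝ := Finset.univ.sup' Finset.univ_nonempty Df
  have hDJ : ∀ i, Df i ≤ DJ := fun i => Finset.le_sup' Df (Finset.mem_univ i)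
  refine ⟨I, J, hDisj, ⟨hIne, β + CI, ?_⟩, ⟨hJne, α - DJ, ?_⟩⟩
  · -- MIN-dominion
    intro i hi t ht
    set S : Fin n → Set ℕ := fun j =>
      if j ∈ I then {m | X m j ≤ Cf j} else {m | t < X m j} with hSdef
    have hS : ∀ j, S j ∈ U := by
      intro j
      by_cases hj : j ∈ I
      · simpa only [hSdef, if_pos hj] using hCf j hj
      · simpa only [hSdef, if_neg hj] using hnotI j hj t
    obtain ⟨m, hm⟩ := Ultrafilter.nonempty_of_mem ((Filter.iInter_mem).mpr hS)
    have hm' : ∀ j, m ∈ S j := Set.mem_iInter.mp hm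
    have hle : (Iᶜ.indicator fun _ => t) ≤ X m := by
      intro j
      by_cases hj : j ∈ I
      · rw [Set.indicator_of_notMem (Set.notMem_compl_iff.mpr hj)]
        exact hXpos m j
      · rw [Set.indicator_of_mem (Set.mem_compl hj)]
        have h := hm' j
        simp only [hSdef, if_neg hj, Set.mem_setOf_eq] at h
        exact h.le
    have h1 : T (Iᶜ.indicator fun _ => t) i ≤ T (X m) i := hmono hle i
    have h2 : T (X m) i ≤ β + X m i := (hXA m i).2
    have h3 : X m i ≤ Cf i := by
      have h := hm' i
      simp only [hSdef, if_pos hi, Set.mem_setOf_eq] at h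
      exact h
    have h4 := hCI i
    linarith
  · -- MAX-dominion
    intro i hi t ht
    set S : Fin n → Set ℕ := fun j =>
      if j ∈ J then {m | Mx m - X m j ≤ Df j} else {m | t < Mx m - X m j} with hSdef
    have hS : ∀ j, S j ∈ U := by
      intro j
      by_cases hj : j ∈ J
      · simpa only [hSdef, if_pos hj] using hDf j hj
      · simpa only [hSdef, if_neg hj] using hnotJ j hj t
    obtain ⟨m, hm⟩ := Ultrafilter.nonempty_of_mem ((Filter.iInter_mem).mpr hS)
    have hm' : ∀ j, m ∈ S j := Set.mem_iInter.mp hm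
    have hy : (fun j => X m j + (-(Mx m))) ∈ A := shiftA (X m) (hXA m) _
    have hle : (fun j => X m j + (-(Mx m))) ≤ (Jᶜ.indicator fun _ => -t) := by
      intro j
      by_cases hj : j ∈ J
      · rw [Set.indicator_of_notMem (Set.notMem_compl_iff.mpr hj)]
        have := hXw m j
        simp only [hMxdef]
        linarith
      · rw [Set.indicator_of_mem (Set.mem_compl hj)]
        have h := hm' j
        simp only [hSdef, if_neg hj, Set.mem_setOf_eq] at h
        simp only []
        linarith
    have h1 : T (fun j => X m j + (-(Mx m))) i ≤ T (Jᶜ.indicator fun _ => -t) i :=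
      hmono hle i
    have h2 : α + (X m i + (-(Mx m))) ≤ T (fun j => X m j + (-(Mx m))) i := (hy i).1
    have h3 : Mx m - X m i ≤ Df i := by
      have h := hm' i
      simp only [hSdef, if_pos hi, Set.mem_setOf_eq] at h
      exact h
    have h4 := hDJ i
    linarith
end

section
/- Let n ≥ 1 and let T : ℝⁿ → ℝⁿ be monotone and additively homogeneous. Then the following are equivalent: (a) there is no pair (I, J) of disjoint subsets of {1,…,n} such that I is a MIN-dominion for T and J is a MAX-dominion for T; (b) for every g ∈ ℝⁿ there exists λ ∈ ℝ such that for every x ∈ ℝⁿ and every i ∈ {1,…,n}, the sequence k ↦ [(g+T)^k(x)]_i / k converges to λ as k → ∞, where (g+T)^k denotes the k-fold iterate of the map x ↦ g + T(x). -/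
/-!
(a) ⇒ (b): for `S = g + T`, the slice space `addSliceSpace n S α β`, with `α`, `β` the smallest and
largest entries of `S 0`, contains `0` and is `S`-invariant, so it contains the orbit of `0`. If the
spread `max x - min x` were unbounded on it, fix an ordering of the coordinates shared by slice
vectors of arbitrarily large spread: the coordinates staying boundedly above the minimum form a
MIN-dominion of `S`, those staying boundedly below the maximum a disjoint MAX-dominion, and these
are dominions of `T` as well. Hence the orbit of `0` has bounded spread, Fekete's lemma applied to
its maximal entry gives a common growth rate, and nonexpansiveness of `S` in the sup norm carries
it over to every starting point.

(b) ⇒ (a): given disjoint dominions `I` and `J`, take `g` zero on `I` and large on `Iᶜ`; the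
dominion bounds make the orbit grow strictly slower on `I` than on `J`.
-/

open Filter Topology

variable {n : ℕ} {S T : (Fin n → ℝ) → (Fin n → ℝ)}

namespace AddHomog

theorem const_add (hT : AddHomog n T) (g : Fin n → ℝ) :
    AddHomog n fun y j => g j + T y j := by
  intro x c
  ext j
  simp only [hT x c]
  ring

theorem iterate (hS : AddHomog n S) : ∀ k : ℕ, AddHomog n S^[k]
  | 0 => fun _ _ => rfl
  | k + 1 => fun x c => by
    rw [Function.iterate_succ_apply, Function.iterate_succ_apply, hS x c, hS.iterate k]

theorem apply_le_apply_add (hS : AddHomog n S) (hmono : Monotone S) {x y : Fin n → ℝ} {c : ℝ}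
    (h : ∀ j, x j ≤ y j + c) (i : Fin n) : S x i ≤ S y i + c := by
  simpa only [hS y c] using hmono h i

theorem apply_add_le_apply (hS : AddHomog n S) (hmono : Monotone S) {x y : Fin n → ℝ} {c : ℝ}
    (h : ∀ j, y j + c ≤ x j) (i : Fin n) : S y i + c ≤ S x i := by
  simpa only [hS y c] using hmono h i

theorem lipschitzWith_one (hS : AddHomog n S) (hmono : Monotone S) : LipschitzWith 1 S := by
  refine LipschitzWith.of_dist_le_mul fun x y => ?_
  rw [NNReal.coe_one, one_mul, dist_pi_le_iff dist_nonneg]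
  intro i
  have hxy : ∀ j, |x j - y j| ≤ dist x y := fun j => dist_le_pi_dist x y j
  have h₁ := hS.apply_le_apply_add hmono (x := x) (y := y) (c := dist x y)
    (fun j => by linarith [(abs_le.mp (hxy j)).2]) i
  have h₂ := hS.apply_le_apply_add hmono (x := y) (y := x) (c := dist x y)
    (fun j => by linarith [(abs_le.mp (hxy j)).1]) i
  rw [Real.dist_eq, abs_sub_le_iff]
  constructor <;> linarith

theorem add_const_mem_addSliceSpace (hS : AddHomog n S) {α β : ℝ} {x : Fin n → ℝ}
    (hx : x ∈ addSliceSpace n S α β) (c : ℝ) :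
    (fun j => x j + c) ∈ addSliceSpace n S α β := fun i => by
  rw [hS x c]
  constructor <;> linarith [hx i]

theorem mapsTo_addSliceSpace (hS : AddHomog n S) (hmono : Monotone S) (α β : ℝ) :
    Set.MapsTo S (addSliceSpace n S α β) (addSliceSpace n S α β) := fun x hx i => by
  constructor
  · linarith [hS.apply_add_le_apply hmono (x := S x) (y := x) (c := α)
      (fun j => by linarith [hx j]) i]
  · linarith [hS.apply_le_apply_add hmono (x := S x) (y := x) (c := β)
      (fun j => by linarith [hx j]) i]

end AddHomog

theorem LipschitzWith.dist_iterate_le {X : Type*} [PseudoMetricSpace X] {f : X → X}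
    (hf : LipschitzWith 1 f) (x : X) : ∀ k : ℕ, dist (f^[k] x) x ≤ k * dist (f x) x
  | 0 => by simp
  | k + 1 => by
    rw [Function.iterate_succ_apply']
    calc dist (f (f^[k] x)) x ≤ dist (f (f^[k] x)) (f x) + dist (f x) x := dist_triangle _ _ _
      _ ≤ dist (f^[k] x) x + dist (f x) x := by
          gcongr; simpa using hf.dist_le_mul (f^[k] x) x
      _ ≤ (k + 1 : ℕ) * dist (f x) x := by
          push_cast; linarith [hf.dist_iterate_le x k]

theorem Subadditive.tendsto_div_lim_of_mul_le {u : ℕ → ℝ} (hu : Subadditive u) {c : ℝ}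
    (h : ∀ k : ℕ, c * k ≤ u k) : Tendsto (fun k : ℕ => u k / k) atTop (𝓝 hu.lim) := by
  refine hu.tendsto_lim ⟨min c 0, ?_⟩
  rintro _ ⟨k, rfl⟩
  rcases k.eq_zero_or_pos with rfl | hk
  · simp
  · exact (min_le_left _ _).trans ((le_div_iff₀ (by positivity)).2 (by linarith [h k]))

theorem tendsto_div_of_abs_sub_le {u v : ℕ → ℝ} {L C : ℝ}
    (hu : Tendsto (fun k : ℕ => u k / k) atTop (𝓝 L)) (h : ∀ k, |v k - u k| ≤ C) :
    Tendsto (fun k : ℕ => v k / k) atTop (𝓝 L) := by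
  have hdiff : Tendsto (fun k : ℕ => (v k - u k) / k) atTop (𝓝 0) := by
    refine squeeze_zero_norm (fun k => ?_) (tendsto_const_div_atTop_nhds_zero_nat C)
    rw [norm_div, Real.norm_eq_abs, Real.norm_natCast]
    exact div_le_div_of_nonneg_right (h k) (Nat.cast_nonneg k)
  simpa [sub_div] using hdiff.add hu

theorem le_of_tendsto_div {u : ℕ → ℝ} {a L : ℝ} (hu : Tendsto (fun k : ℕ => u k / k) atTop (𝓝 L))
    (h : ∀ k : ℕ, u k ≤ k * a) : L ≤ a :=
  le_of_tendsto hu <| eventually_atTop.2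
    ⟨1, fun k hk => (div_le_iff₀ (by positivity)).2 (by linarith [h k])⟩

theorem ge_of_tendsto_div {u : ℕ → ℝ} {a L : ℝ} (hu : Tendsto (fun k : ℕ => u k / k) atTop (𝓝 L))
    (h : ∀ k : ℕ, k * a ≤ u k) : a ≤ L :=
  ge_of_tendsto hu <| eventually_atTop.2
    ⟨1, fun k hk => (le_div_iff₀ (by positivity)).2 (by linarith [h k])⟩

theorem AddHomog.abs_iterate_zero_apply_le (hS : AddHomog n S) (hmono : Monotone S) (k : ℕ)
    (i : Fin n) : |S^[k] 0 i| ≤ k * ‖S 0‖ := by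
  have h := (hS.lipschitzWith_one hmono).dist_iterate_le 0 k
  rw [dist_zero_right, dist_zero_right] at h
  exact (norm_le_pi_norm (S^[k] 0) i).trans h

theorem AddHomog.exists_tendsto_iterate_div (hS : AddHomog n S) (hmono : Monotone S) {R : ℝ}
    (hR : ∀ (k : ℕ) (i j : Fin n), S^[k] 0 j - S^[k] 0 i ≤ R) :
    ∃ lam : ℝ, ∀ (x : Fin n → ℝ) (i : Fin n),
      Tendsto (fun k : ℕ => S^[k] x i / k) atTop (𝓝 lam) := by
  cases isEmpty_or_nonempty (Fin n)
  · exact ⟨0, fun _ i => isEmptyElim i⟩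
  set u : ℕ → ℝ := fun k => ⨆ i, S^[k] 0 i
  have hle_u : ∀ k i, S^[k] 0 i ≤ u k := fun k i => le_ciSup (Finite.bddAbove_range _) i
  have hsub : Subadditive u := fun m k => ciSup_le fun i => by
    have := (hS.iterate m).apply_le_apply_add (hmono.iterate m) (x := S^[k] 0) (y := 0)
      (c := u k) (fun j => by simpa using hle_u k j) i
    rw [Function.iterate_add_apply]
    linarith [hle_u m i]
  have hlim := hsub.tendsto_div_lim_of_mul_le (c := -‖S 0‖) fun k => by
    obtain ⟨i⟩ := ‹Nonempty (Fin n)›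
    linarith [(abs_le.mp (hS.abs_iterate_zero_apply_le hmono k i)).1, hle_u k i]
  refine ⟨hsub.lim, fun x i => tendsto_div_of_abs_sub_le hlim (C := ‖x‖ + R) fun k => ?_⟩
  have hx : |S^[k] x i - S^[k] 0 i| ≤ ‖x‖ := by
    have := (hS.lipschitzWith_one hmono).iterate k |>.dist_le_mul x 0
    rw [one_pow, NNReal.coe_one, one_mul, dist_zero_right] at this
    exact (dist_le_pi_dist _ _ i).trans this
  have hu_le : u k ≤ S^[k] 0 i + R := ciSup_le fun j => by linarith [hR k i j]
  rw [abs_le] at hx ⊢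
  constructor <;> linarith [hle_u k i]

theorem MinDominion.exists_iterate_le (hT : AddHomog n T) (hmono : Monotone T)
    {Δ : Set (Fin n)} (hΔ : MinDominion n T Δ) :
    ∃ β : ℝ, ∀ (g : Fin n → ℝ) (γ : ℝ), (∀ i ∈ Δ, g i ≤ γ) →
      ∀ k : ℕ, ∀ i ∈ Δ, (fun y j => g j + T y j)^[k] 0 i ≤ k * (γ + β) := by
  obtain ⟨-, β, hβ⟩ := hΔ
  refine ⟨β, fun g γ hg k => ?_⟩
  set S : (Fin n → ℝ) → (Fin n → ℝ) := fun y j => g j + T y j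
  have hbound : ∀ k j, S^[k] 0 j ≤ k * ‖S 0‖ := fun k j =>
    (abs_le.mp ((hT.const_add g).abs_iterate_zero_apply_le (hmono.const_add g) k j)).2
  induction k with
  | zero => simp
  | succ k ih =>
    intro i hi
    set t := k * max (‖S 0‖ - (γ + β)) 0
    have hle : ∀ j, S^[k] 0 j ≤ Δᶜ.indicator (fun _ => t) j + k * (γ + β) := fun j => by
      by_cases hj : j ∈ Δ
      · simpa [hj] using ih j hj
      · rw [Set.indicator_of_mem (Set.mem_compl hj)]
        nlinarith [hbound k j, le_max_left (‖S 0‖ - (γ + β)) 0, k.cast_nonneg (α := ℝ)]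
    have hT_le := hT.apply_le_apply_add hmono hle i
    have hβt := hβ i hi t (by positivity)
    rw [Function.iterate_succ_apply']
    show g i + T _ i ≤ _
    push_cast
    linarith [hg i hi]

theorem MaxDominion.exists_le_iterate (hT : AddHomog n T) (hmono : Monotone T)
    {Δ : Set (Fin n)} (hΔ : MaxDominion n T Δ) :
    ∃ α : ℝ, ∀ (g : Fin n → ℝ) (γ : ℝ), (∀ i ∈ Δ, γ ≤ g i) →
      ∀ k : ℕ, ∀ i ∈ Δ, k * (γ + α) ≤ (fun y j => g j + T y j)^[k] 0 i := by
  obtain ⟨-, α, hα⟩ := hΔ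
  refine ⟨α, fun g γ hg k => ?_⟩
  set S : (Fin n → ℝ) → (Fin n → ℝ) := fun y j => g j + T y j
  have hbound : ∀ k j, -(k * ‖S 0‖) ≤ S^[k] 0 j := fun k j =>
    (abs_le.mp ((hT.const_add g).abs_iterate_zero_apply_le (hmono.const_add g) k j)).1
  induction k with
  | zero => simp
  | succ k ih =>
    intro i hi
    set t := k * max (‖S 0‖ + (γ + α)) 0
    have hle : ∀ j, Δᶜ.indicator (fun _ => -t) j + k * (γ + α) ≤ S^[k] 0 j := fun j => by
      by_cases hj : j ∈ Δ
      · simpa [hj] using ih j hj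
      · rw [Set.indicator_of_mem (Set.mem_compl hj)]
        nlinarith [hbound k j, le_max_left (‖S 0‖ + (γ + α)) 0, k.cast_nonneg (α := ℝ)]
    have hT_le := hT.apply_add_le_apply hmono hle i
    have hαt := hα i hi t (by positivity)
    rw [Function.iterate_succ_apply']
    show _ ≤ g i + T _ i
    push_cast
    linarith [hg i hi]

theorem not_exists_dominions_of_tendsto (hT : AddHomog n T) (hmono : Monotone T)
    (h : ∀ g : Fin n → ℝ, ∃ lam : ℝ, ∀ (x : Fin n → ℝ) (i : Fin n),
      Tendsto (fun k : ℕ => (fun y j => g j + T y j)^[k] x i / k) atTop (𝓝 lam)) :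
    ¬ ∃ I J : Set (Fin n), Disjoint I J ∧ MinDominion n T I ∧ MaxDominion n T J := by
  rintro ⟨I, J, hIJ, hI, hJ⟩
  obtain ⟨β, hβ⟩ := hI.exists_iterate_le hT hmono
  obtain ⟨α, hα⟩ := hJ.exists_le_iterate hT hmono
  obtain ⟨i, hi⟩ := hI.1
  obtain ⟨j, hj⟩ := hJ.1
  -- With this `g`, orbits grow at rate at most `β` on `I` but at least `β + 1` on `J`.
  obtain ⟨lam, hlam⟩ := h (Iᶜ.indicator fun _ => β - α + 1)
  have hI_le : lam ≤ 0 + β := le_of_tendsto_div (hlam 0 i)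
    (hβ _ 0 (fun i' hi' => by simp [hi']) · i hi)
  have hJ_ge : β - α + 1 + α ≤ lam := ge_of_tendsto_div (hlam 0 j)
    (hα _ _ (fun j' hj' => by simp [Set.disjoint_right.mp hIJ hj']) · j hj)
  linarith

theorem exists_forall_of_forall_exists_antitone {ι : Type*} [Finite ι] {P : ι → ℝ → Prop}
    (hP : ∀ σ, Antitone (P σ)) (h : ∀ M, ∃ σ, P σ M) : ∃ σ, ∀ M, P σ M := by
  by_contra! hne
  choose M hM using hne
  obtain ⟨σ, hσ⟩ := h (⨆ σ, M σ)
  exact hM σ (hP σ (le_ciSup (Finite.bddAbove_range M) σ) hσ)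

theorem exists_lower_cluster {κ : Type*} [LinearOrder κ] (key : Fin n → κ)
    {A : Set (Fin n → ℝ)} (hsorted : ∀ x ∈ A, ∀ i j, key i ≤ key j → x i ≤ x j)
    (hunb : ∀ M, ∃ x ∈ A, ∃ i j, M ≤ x j - x i) :
    ∃ I : Set (Fin n), I.Nonempty ∧ ∃ C, (∀ x ∈ A, ∀ i ∈ I, ∀ k, x i ≤ x k + C) ∧
      ∀ t, ∃ x ∈ A, ∀ i ∈ I, ∀ j ∉ I, x i + t ≤ x j := by
  obtain ⟨-, -, i, -, -⟩ := hunb 0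
  have : Nonempty (Fin n) := ⟨i⟩
  obtain ⟨i₀, hi₀⟩ := Finite.exists_min key
  have hmin : ∀ x ∈ A, ∀ k, x i₀ ≤ x k := fun x hx k => hsorted x hx _ _ (hi₀ k)
  -- `I` collects the coordinates staying boundedly above the minimal one; the lowest coordinate
  -- outside `I` in the common order is then far above all of `I`.
  set I : Set (Fin n) := {i | ∃ C, ∀ x ∈ A, x i ≤ x i₀ + C}
  obtain ⟨C, hC⟩ : ∃ C, ∀ x ∈ A, ∀ i ∈ I, x i ≤ x i₀ + C := by
    choose! C hC using fun i (hi : i ∈ I) => hi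
    refine ⟨⨆ i, C i, fun x hx i hi => (hC i hi x hx).trans ?_⟩
    gcongr
    exact le_ciSup (Finite.bddAbove_range C) i
  have hIc : Iᶜ.Nonempty := by
    refine Set.nonempty_compl.2 fun hI => ?_
    obtain ⟨x, hx, i, j, hij⟩ := hunb (C + 1)
    linarith [hC x hx j (hI ▸ Set.mem_univ j), hmin x hx i]
  obtain ⟨j₀, hj₀, hj₀min⟩ := Set.exists_min_image Iᶜ key (Set.toFinite _) hIc
  refine ⟨I, ⟨i₀, 0, fun x _ => by simp⟩, C,
    fun x hx i hi k => by linarith [hC x hx i hi, hmin x hx k], fun t => ?_⟩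
  obtain ⟨x, hx, hgap⟩ :=
    (by simpa [I] using hj₀ : ∀ c, ∃ x ∈ A, x i₀ + c < x j₀) (C + t)
  exact ⟨x, hx, fun i hi j hj => by linarith [hC x hx i hi, hsorted x hx _ _ (hj₀min j hj)]⟩

theorem exists_upper_cluster {κ : Type*} [LinearOrder κ] (key : Fin n → κ)
    {A : Set (Fin n → ℝ)} (hsorted : ∀ x ∈ A, ∀ i j, key i ≤ key j → x i ≤ x j)
    (hunb : ∀ M, ∃ x ∈ A, ∃ i j, M ≤ x j - x i) :
    ∃ J : Set (Fin n), J.Nonempty ∧ ∃ C, (∀ x ∈ A, ∀ j ∈ J, ∀ k, x k ≤ x j + C) ∧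
      ∀ t, ∃ x ∈ A, ∀ j ∈ J, ∀ i ∉ J, x i + t ≤ x j := by
  obtain ⟨J, hJ, C, hC, hsep⟩ := exists_lower_cluster (OrderDual.toDual ∘ key) (A := -A)
    (fun x hx i j hij => by simpa using hsorted (-x) hx j i hij)
    (fun M => by
      obtain ⟨x, hx, i, j, h⟩ := hunb M
      exact ⟨-x, by simpa using hx, j, i, by simp only [Pi.neg_apply]; linarith⟩)
  refine ⟨J, hJ, C, fun x hx j hj k => ?_, fun t => ?_⟩
  · have := hC (-x) (by simpa using hx) j hj k
    simp only [Pi.neg_apply] at this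
    linarith
  · obtain ⟨x, hx, h⟩ := hsep t
    refine ⟨-x, hx, fun j hj i hi => ?_⟩
    simp only [Pi.neg_apply]
    linarith [h j hj i hi]

theorem minDominion_of_separated (hS : AddHomog n S) (hmono : Monotone S) {α β C : ℝ}
    {I : Set (Fin n)} (hI : I.Nonempty)
    (h : ∀ t, ∃ x ∈ addSliceSpace n S α β,
      (∀ i ∈ I, ∀ i' ∈ I, x i ≤ x i' + C) ∧ ∀ i ∈ I, ∀ j ∉ I, x i + t ≤ x j) :
    MinDominion n S I := by
  obtain ⟨i₁, hi₁⟩ := hI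
  refine ⟨⟨i₁, hi₁⟩, β + 2 * C, fun i hi t _ => ?_⟩
  obtain ⟨x, hx, hspread, hsep⟩ := h t
  have hC : 0 ≤ C := by linarith [hspread i₁ hi₁ i₁ hi₁]
  have hle : ∀ j, Iᶜ.indicator (fun _ => t) j ≤ (x j + -x i₁) + C := fun j => by
    by_cases hj : j ∈ I
    · simp only [Set.indicator_of_notMem (Set.notMem_compl_iff.2 hj)]
      linarith [hspread i₁ hi₁ j hj]
    · simp only [Set.indicator_of_mem (Set.mem_compl hj)]
      linarith [hsep i₁ hi₁ j hj]
  linarith [hS.apply_le_apply_add hmono hle i,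
    (hS.add_const_mem_addSliceSpace hx (-x i₁) i).2, hspread i hi i₁ hi₁]

theorem maxDominion_of_separated (hS : AddHomog n S) (hmono : Monotone S) {α β C : ℝ}
    {J : Set (Fin n)} (hJ : J.Nonempty)
    (h : ∀ t, ∃ x ∈ addSliceSpace n S α β,
      (∀ j ∈ J, ∀ j' ∈ J, x j ≤ x j' + C) ∧ ∀ j ∈ J, ∀ i ∉ J, x i + t ≤ x j) :
    MaxDominion n S J := by
  obtain ⟨j₁, hj₁⟩ := hJ
  refine ⟨⟨j₁, hj₁⟩, α - 2 * C, fun j hj t _ => ?_⟩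
  obtain ⟨x, hx, hspread, hsep⟩ := h t
  have hC : 0 ≤ C := by linarith [hspread j₁ hj₁ j₁ hj₁]
  have hle : ∀ i, (x i + -x j₁) ≤ Jᶜ.indicator (fun _ => -t) i + C := fun i => by
    by_cases hi : i ∈ J
    · simp only [Set.indicator_of_notMem (Set.notMem_compl_iff.2 hi)]
      linarith [hspread i hi j₁ hj₁]
    · simp only [Set.indicator_of_mem (Set.mem_compl hi)]
      linarith [hsep j₁ hj₁ i hi]
  linarith [hS.apply_le_apply_add hmono hle j,
    (hS.add_const_mem_addSliceSpace hx (-x j₁) j).1, hspread j₁ hj₁ j hj]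

theorem AddHomog.exists_dominions_of_unbounded (hS : AddHomog n S) (hmono : Monotone S)
    {α β : ℝ} (hunb : ∀ M, ∃ x ∈ addSliceSpace n S α β, ∃ i j, M ≤ x j - x i) :
    ∃ I J : Set (Fin n), Disjoint I J ∧ MinDominion n S I ∧ MaxDominion n S J := by
  -- Among the finitely many orderings, one is shared by slice vectors of arbitrarily large spread.
  obtain ⟨σ, hσ⟩ := exists_forall_of_forall_exists_antitone
    (P := fun (σ : Equiv.Perm (Fin n)) M =>
      ∃ x ∈ addSliceSpace n S α β, Monotone (x ∘ σ) ∧ ∃ i j, M ≤ x j - x i)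
    (fun _ _ _ hMM' ⟨x, hx, hxσ, i, j, h⟩ => ⟨x, hx, hxσ, i, j, hMM'.trans h⟩)
    (fun M => by
      obtain ⟨x, hx, h⟩ := hunb M
      exact ⟨Tuple.sort x, x, hx, Tuple.monotone_sort x, h⟩)
  set A := {x ∈ addSliceSpace n S α β | Monotone (x ∘ σ)}
  have hsorted : ∀ x ∈ A, ∀ i j, σ.symm i ≤ σ.symm j → x i ≤ x j := fun x hx i j hij => by
    simpa using hx.2 hij
  have hunbA : ∀ M, ∃ x ∈ A, ∃ i j, M ≤ x j - x i := fun M => by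
    obtain ⟨x, hx, hxσ, h⟩ := hσ M
    exact ⟨x, ⟨hx, hxσ⟩, h⟩
  obtain ⟨I, hI, C, hC, hsepI⟩ := exists_lower_cluster σ.symm hsorted hunbA
  obtain ⟨J, hJ, C', hC', hsepJ⟩ := exists_upper_cluster σ.symm hsorted hunbA
  refine ⟨I, J, Set.disjoint_left.2 fun k hkI hkJ => ?_,
    minDominion_of_separated hS hmono (α := α) (β := β) (C := C) hI fun t => ?_,
    maxDominion_of_separated hS hmono (α := α) (β := β) (C := C') hJ fun t => ?_⟩
  · obtain ⟨x, hx, i, j, h⟩ := hunbA (C + C' + 1)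
    linarith [hC x hx k hkI i, hC' x hx k hkJ j]
  · obtain ⟨x, hx, hsep⟩ := hsepI t
    exact ⟨x, hx.1, fun i hi i' _ => hC x hx i hi i', hsep⟩
  · obtain ⟨x, hx, hsep⟩ := hsepJ t
    exact ⟨x, hx.1, fun j _ j' hj' => hC' x hx j' hj' j, hsep⟩

theorem MinDominion.of_const_add {g : Fin n → ℝ} {Δ : Set (Fin n)}
    (h : MinDominion n (fun y j => g j + T y j) Δ) : MinDominion n T Δ := by
  obtain ⟨hΔ, β, hβ⟩ := h
  exact ⟨hΔ, β - ⨅ j, g j, fun i hi t ht => by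
    linarith [hβ i hi t ht, ciInf_le (Finite.bddBelow_range g) i]⟩

theorem MaxDominion.of_const_add {g : Fin n → ℝ} {Δ : Set (Fin n)}
    (h : MaxDominion n (fun y j => g j + T y j) Δ) : MaxDominion n T Δ := by
  obtain ⟨hΔ, α, hα⟩ := h
  exact ⟨hΔ, α - ⨆ j, g j, fun i hi t ht => by
    linarith [hα i hi t ht, le_ciSup (Finite.bddAbove_range g) i]⟩

theorem exists_tendsto_of_not_exists_dominions (hT : AddHomog n T) (hmono : Monotone T)
    (h : ¬ ∃ I J : Set (Fin n), Disjoint I J ∧ MinDominion n T I ∧ MaxDominion n T J)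
    (g : Fin n → ℝ) : ∃ lam : ℝ, ∀ (x : Fin n → ℝ) (i : Fin n),
      Tendsto (fun k : ℕ => (fun y j => g j + T y j)^[k] x i / k) atTop (𝓝 lam) := by
  set S : (Fin n → ℝ) → (Fin n → ℝ) := fun y j => g j + T y j
  have hS : AddHomog n S := hT.const_add g
  have hSmono : Monotone S := hmono.const_add g
  set A := addSliceSpace n S (⨅ i, S 0 i) (⨆ i, S 0 i)
  have h0 : (0 : Fin n → ℝ) ∈ A := fun i => by
    simpa using ⟨ciInf_le (Finite.bddBelow_range (S 0)) i, le_ciSup (Finite.bddAbove_range (S 0)) i⟩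
  obtain ⟨R, hR⟩ : ∃ R, ∀ x ∈ A, ∀ i j, x j - x i ≤ R := by
    by_contra! hunb
    obtain ⟨I, J, hIJ, hI, hJ⟩ := hS.exists_dominions_of_unbounded hSmono fun M => by
      obtain ⟨x, hx, i, j, hij⟩ := hunb M
      exact ⟨x, hx, i, j, hij.le⟩
    exact h ⟨I, J, hIJ, hI.of_const_add, hJ.of_const_add⟩
  exact hS.exists_tendsto_iterate_div hSmono fun k =>
    hR _ ((hS.mapsTo_addSliceSpace hSmono _ _).iterate k h0)

theorem stmt4_general (n : ℕ)
    (T : (Fin n → ℝ) → (Fin n → ℝ))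
    (hmono : Monotone T) (hhom : AddHomog n T) :
    (¬ ∃ I J : Set (Fin n),
        Disjoint I J ∧ MinDominion n T I ∧ MaxDominion n T J) ↔
    (∀ g : Fin n → ℝ, ∃ lam : ℝ, ∀ (x : Fin n → ℝ) (i : Fin n),
        Filter.Tendsto (fun k : ℕ => ((fun y => fun j => g j + T y j)^[k] x) i / k)
          Filter.atTop (nhds lam)) :=
  ⟨exists_tendsto_of_not_exists_dominions hhom hmono, not_exists_dominions_of_tendsto hhom hmono⟩

theorem stmt4 (n : ℕ) (hn : 1 ≤ n)
    (T : (Fin n → ℝ) → (Fin n → ℝ))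
    (hmono : Monotone T) (hhom : AddHomog n T) :
    (¬ ∃ I J : Set (Fin n),
        Disjoint I J ∧ MinDominion n T I ∧ MaxDominion n T J) ↔
    (∀ g : Fin n → ℝ, ∃ lam : ℝ, ∀ (x : Fin n → ℝ) (i : Fin n),
        Filter.Tendsto (fun k : ℕ => ((fun y => fun j => g j + T y j)^[k] x) i / k)
          Filter.atTop (nhds lam)) :=
  stmt4_general n T hmono hhom
end

section
/- Let n ≥ 1 and let T : ℝⁿ → ℝⁿ be monotone and additively homogeneous. Let I, J ⊆ {1,…,n} be nonempty disjoint sets and α, β ∈ ℝ be such that: T_i(t·e_{Iᶜ}) ≤ β for all i ∈ I and all t ≥ 0; T_j(−t·e_{Jᶜ}) ≥ α for all j ∈ J and all t ≥ 0; and α ≤ T_ℓ(0) ≤ β for all ℓ ∈ {1,…,n}. Let s ≥ 0 and define S : ℝⁿ → ℝⁿ by S(x) = s·e_J + T(x). Then for every k ∈ ℕ one has k·(s·e_J + α·e) ≤ S^k(0) ≤ k·(s·e_{Iᶜ} + β·e), where S^k denotes the k-fold iterate of S. -/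
theorem stmt7 (n : ℕ) (hn : 1 ≤ n)
    (T : (Fin n → ℝ) → (Fin n → ℝ))
    (hmono : Monotone T) (hhom : AddHomog n T)
    (I J : Set (Fin n)) (hI : I.Nonempty) (hJ : J.Nonempty) (hIJ : Disjoint I J)
    (α β : ℝ)
    (hmin : ∀ i ∈ I, ∀ t : ℝ, 0 ≤ t → T (Iᶜ.indicator fun _ => t) i ≤ β)
    (hmax : ∀ j ∈ J, ∀ t : ℝ, 0 ≤ t → α ≤ T (Jᶜ.indicator fun _ => -t) j)
    (h0 : ∀ l : Fin n, α ≤ T (fun _ => 0) l ∧ T (fun _ => 0) l ≤ β)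
    (s : ℝ) (hs : 0 ≤ s) :
    ∀ (k : ℕ) (i : Fin n),
      (k : ℝ) * (s * J.indicator (fun _ => (1:ℝ)) i + α) ≤
        ((fun x => fun j => J.indicator (fun _ => s) j + T x j)^[k] (fun _ => 0)) i ∧
      ((fun x => fun j => J.indicator (fun _ => s) j + T x j)^[k] (fun _ => 0)) i ≤
        (k : ℝ) * (s * Iᶜ.indicator (fun _ => (1:ℝ)) i + β) := by
  intro k
  induction k with
  | zero => intro i; simp
  | succ k ih =>
    intro i
    have hks : (0:ℝ) ≤ (k:ℝ) * s := mul_nonneg (Nat.cast_nonneg k) hs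
    set F : (Fin n → ℝ) → (Fin n → ℝ) :=
      fun x => fun j => J.indicator (fun _ => s) j + T x j with hF
    have hiter : F^[k+1] (fun _ => 0) i
        = J.indicator (fun _ => s) i + T (F^[k] (fun _ => 0)) i := by
      rw [Function.iterate_succ_apply']
    -- upper bound preparation
    have hUeq : ∀ l, (k:ℝ) * (s * Iᶜ.indicator (fun _ => (1:ℝ)) l + β)
        = Iᶜ.indicator (fun _ => (k:ℝ)*s) l + (k:ℝ)*β := by
      intro l
      by_cases hl : l ∈ Iᶜ
      · simp only [Set.indicator_of_mem hl]; ring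
      · simp only [Set.indicator_of_notMem hl]; ring
    have hle : F^[k] (fun _ => 0) ≤ fun l => Iᶜ.indicator (fun _ => (k:ℝ)*s) l + (k:ℝ)*β := by
      intro l
      have h := (ih l).2
      rw [hUeq l] at h
      exact h
    have hTU : T (fun l => Iᶜ.indicator (fun _ => (k:ℝ)*s) l + (k:ℝ)*β)
        = fun l => T (Iᶜ.indicator fun _ => (k:ℝ)*s) l + (k:ℝ)*β := hhom _ _
    have hTup : T (F^[k] (fun _ => 0)) i ≤ T (Iᶜ.indicator fun _ => (k:ℝ)*s) i + (k:ℝ)*β := by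
      have h := hmono hle i
      rw [hTU] at h
      exact h
    -- lower bound preparation
    have hLeq : ∀ l, (k:ℝ) * (s * J.indicator (fun _ => (1:ℝ)) l + α)
        = Jᶜ.indicator (fun _ => -((k:ℝ)*s)) l + ((k:ℝ)*s + (k:ℝ)*α) := by
      intro l
      by_cases hl : l ∈ Jᶜ
      · have : l ∉ J := hl
        simp only [Set.indicator_of_mem hl, Set.indicator_of_notMem this]; ring
      · have : l ∈ J := not_not.mp hl
        simp only [Set.indicator_of_notMem hl, Set.indicator_of_mem this]; ring
    have hge : (fun l => Jᶜ.indicator (fun _ => -((k:ℝ)*s)) l + ((k:ℝ)*s + (k:ℝ)*α))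
        ≤ F^[k] (fun _ => 0) := by
      intro l
      have h := (ih l).1
      rw [hLeq l] at h
      exact h
    have hTL : T (fun l => Jᶜ.indicator (fun _ => -((k:ℝ)*s)) l + ((k:ℝ)*s + (k:ℝ)*α))
        = fun l => T (Jᶜ.indicator fun _ => -((k:ℝ)*s)) l + ((k:ℝ)*s + (k:ℝ)*α) := hhom _ _
    have hTlow : T (Jᶜ.indicator fun _ => -((k:ℝ)*s)) i + ((k:ℝ)*s + (k:ℝ)*α)
        ≤ T (F^[k] (fun _ => 0)) i := by
      have h := hmono hge i
      rw [hTL] at h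
      exact h
    constructor
    · -- lower bound
      rw [hiter]
      by_cases hJi : i ∈ J
      · have h1 : α ≤ T (Jᶜ.indicator fun _ => -((k:ℝ)*s)) i := hmax i hJi ((k:ℝ)*s) hks
        simp only [Set.indicator_of_mem hJi]
        push_cast
        nlinarith [hTlow, h1]
      · have hind : T (fun _ => -((k:ℝ)*s)) i ≤ T (Jᶜ.indicator fun _ => -((k:ℝ)*s)) i := by
          apply hmono
          intro l
          by_cases hl : l ∈ Jᶜ
          · simp [Set.indicator_of_mem hl]
          · simp only [Set.indicator_of_notMem hl]
            linarith
        have hTc : T (fun _ => -((k:ℝ)*s)) = fun l => T (fun _ => 0) l + (-((k:ℝ)*s)) := by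
          have h := hhom (fun _ => 0) (-((k:ℝ)*s))
          simpa using h
        have h2 : T (fun _ => -((k:ℝ)*s)) i = T (fun _ => 0) i + (-((k:ℝ)*s)) := congrFun hTc i
        have hT0 : α ≤ T (fun _ => 0) i := (h0 i).1
        simp only [Set.indicator_of_notMem hJi]
        push_cast
        nlinarith [hTlow, hind, hT0, h2]
    · -- upper bound
      rw [hiter]
      by_cases hi : i ∈ I
      · have hJi : i ∉ J := Set.disjoint_left.mp hIJ hi
        have h1 : T (Iᶜ.indicator fun _ => (k:ℝ)*s) i ≤ β := hmin i hi ((k:ℝ)*s) hks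
        have hiC : i ∉ Iᶜ := by simpa using hi
        simp only [Set.indicator_of_notMem hJi, Set.indicator_of_notMem hiC]
        push_cast
        nlinarith [hTup, h1]
      · have hind : T (Iᶜ.indicator fun _ => (k:ℝ)*s) i ≤ T (fun _ => (k:ℝ)*s) i := by
          apply hmono
          intro l
          by_cases hl : l ∈ Iᶜ
          · simp [Set.indicator_of_mem hl]
          · simp only [Set.indicator_of_notMem hl]
            linarith
        have hTc : T (fun _ => (k:ℝ)*s) = fun l => T (fun _ => 0) l + (k:ℝ)*s := by
          have h := hhom (fun _ => 0) ((k:ℝ)*s)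
          simpa using h
        have h2 : T (fun _ => (k:ℝ)*s) i = T (fun _ => 0) i + (k:ℝ)*s := congrFun hTc i
        have hT0 : T (fun _ => 0) i ≤ β := (h0 i).2
        have hJs : J.indicator (fun _ => s) i ≤ s := by
          by_cases hJi : i ∈ J
          · simp [Set.indicator_of_mem hJi]
          · simp only [Set.indicator_of_notMem hJi]; linarith
        have hiC : i ∈ Iᶜ := hi
        simp only [Set.indicator_of_mem hiC]
        push_cast
        nlinarith [hTup, hind, hT0, hJs, h2]
end

section
/- Let n ≥ 1 and let T : ℝⁿ → ℝⁿ be monotone and additively homogeneous. Let I, J ⊆ {1,…,n} be nonempty disjoint sets and α, β ∈ ℝ be such that: T_i(t·e_{Iᶜ}) ≤ β for all i ∈ I and all t ≥ 0; T_j(−t·e_{Jᶜ}) ≥ α for all j ∈ J and all t ≥ 0; and α ≤ T_ℓ(0) ≤ β for all ℓ ∈ {1,…,n}. Let s > β − α and define S : ℝⁿ → ℝⁿ by S(x) = s·e_J + T(x). Then there is no λ ∈ ℝ such that for every i ∈ {1,…,n} the sequence k ↦ [S^k(0)]_i / k converges to λ as k → ∞. -/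
/-!
Starting from `0`, the iterates of `S` stay below `k·β·e + k·s·e_{Iᶜ}` and above
`k·(α + s)·e − k·s·e_{Jᶜ}`: each bound is carried from `k` to `k + 1` by monotonicity,
additive homogeneity and the dominion inequality on `I` (resp. `J`). Hence the coordinates in
`I` grow at rate at most `β`, those in `J` at rate at least `α + s > β`, so no common rate exists.
-/

open Set Filter Topology

namespace AddHomog

variable {n : ℕ} {T : (Fin n → ℝ) → (Fin n → ℝ)}

theorem apply_add_const (hT : AddHomog n T) (x : Fin n → ℝ) (c : ℝ) (i : Fin n) :
    T (fun j => x j + c) i = T x i + c :=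
  congrFun (hT x c) i

theorem apply_const (hT : AddHomog n T) (c : ℝ) (i : Fin n) :
    T (fun _ => c) i = T (fun _ => 0) i + c := by
  simpa using hT.apply_add_const (fun _ => 0) c i

end AddHomog

noncomputable def addIndicator {n : ℕ} (T : (Fin n → ℝ) → (Fin n → ℝ)) (J : Set (Fin n)) (s : ℝ) :
    (Fin n → ℝ) → (Fin n → ℝ) :=
  fun x j => J.indicator (fun _ => s) j + T x j

section Bounds

variable {n : ℕ} {T : (Fin n → ℝ) → (Fin n → ℝ)} {I J : Set (Fin n)} {α β s : ℝ}

theorem addIndicator_le (hmono : Monotone T) (hhom : AddHomog n T) (hIJ : Disjoint I J)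
    (hmin : ∀ i ∈ I, ∀ t : ℝ, 0 ≤ t → T (Iᶜ.indicator fun _ => t) i ≤ β)
    (h0 : ∀ l, T (fun _ => 0) l ≤ β) (hs : 0 ≤ s) (c : ℝ) {t : ℝ} (ht : 0 ≤ t) :
    addIndicator T J s (fun l => c + Iᶜ.indicator (fun _ => t) l) ≤
      fun l => (c + β) + Iᶜ.indicator (fun _ => t + s) l := by
  intro l
  have hshift := hhom.apply_add_const (Iᶜ.indicator fun _ => t) c l
  simp only [addIndicator, add_comm c]
  rw [hshift]
  by_cases hl : l ∈ I
  · have hlJ : l ∉ J := hIJ.notMem_of_mem_left hl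
    simp only [indicator_of_notMem hlJ, indicator_of_notMem (notMem_compl_iff.mpr hl)]
    linarith [hmin l hl t ht]
  · have hT : T (Iᶜ.indicator fun _ => t) l ≤ T (fun _ => t) l :=
      hmono (indicator_le_self' fun _ _ => ht) l
    have hJ : J.indicator (fun _ => s) l ≤ s := indicator_le_self' (fun _ _ => hs) l
    simp only [indicator_of_mem (mem_compl hl)]
    linarith [hhom.apply_const t l, h0 l]

theorem le_addIndicator (hmono : Monotone T) (hhom : AddHomog n T)
    (hmax : ∀ j ∈ J, ∀ t : ℝ, 0 ≤ t → α ≤ T (Jᶜ.indicator fun _ => -t) j)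
    (h0 : ∀ l, α ≤ T (fun _ => 0) l) (c : ℝ) {t : ℝ} (ht : 0 ≤ t) :
    (fun l => (c + (α + s)) + Jᶜ.indicator (fun _ => -(t + s)) l) ≤
      addIndicator T J s (fun l => c + Jᶜ.indicator (fun _ => -t) l) := by
  intro l
  have hshift := hhom.apply_add_const (Jᶜ.indicator fun _ => -t) c l
  simp only [addIndicator, add_comm c]
  rw [hshift]
  by_cases hl : l ∈ J
  · simp only [indicator_of_mem hl, indicator_of_notMem (notMem_compl_iff.mpr hl)]
    linarith [hmax l hl t ht]
  · have hT : T (fun _ => -t) l ≤ T (Jᶜ.indicator fun _ => -t) l :=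
      hmono (le_indicator (fun _ _ => le_rfl) fun _ _ => by linarith) l
    simp only [indicator_of_notMem hl, indicator_of_mem (mem_compl hl)]
    linarith [hhom.apply_const (-t) l, h0 l]

theorem monotone_addIndicator (hmono : Monotone T) : Monotone (addIndicator T J s) :=
  fun _ _ hxy l => add_le_add_right (hmono hxy l) _

theorem addIndicator_iterate_le (hmono : Monotone T) (hhom : AddHomog n T) (hIJ : Disjoint I J)
    (hmin : ∀ i ∈ I, ∀ t : ℝ, 0 ≤ t → T (Iᶜ.indicator fun _ => t) i ≤ β)
    (h0 : ∀ l, T (fun _ => 0) l ≤ β) (hs : 0 ≤ s) (k : ℕ) :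
    (addIndicator T J s)^[k] (fun _ => 0) ≤ fun l => k * β + Iᶜ.indicator (fun _ => k * s) l := by
  refine (monotone_addIndicator hmono).seq_le_seq (x := fun k => (addIndicator T J s)^[k] _)
    (y := fun k l => k * β + Iᶜ.indicator (fun _ => k * s) l) k (fun l => by simp)
    (fun m _ => (Function.iterate_succ_apply' _ _ _).le) fun m _ => ?_
  simpa only [Nat.cast_succ, add_mul, one_mul] using
      addIndicator_le hmono hhom hIJ hmin h0 hs (m * β) (by positivity : 0 ≤ (m : ℝ) * s)

theorem le_addIndicator_iterate (hmono : Monotone T) (hhom : AddHomog n T)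
    (hmax : ∀ j ∈ J, ∀ t : ℝ, 0 ≤ t → α ≤ T (Jᶜ.indicator fun _ => -t) j)
    (h0 : ∀ l, α ≤ T (fun _ => 0) l) (hs : 0 ≤ s) (k : ℕ) :
    (fun l => k * (α + s) + Jᶜ.indicator (fun _ => -(k * s)) l) ≤
      (addIndicator T J s)^[k] (fun _ => 0) := by
  refine (monotone_addIndicator hmono).seq_le_seq
    (x := fun k l => k * (α + s) + Jᶜ.indicator (fun _ => -(k * s)) l)
    (y := fun k => (addIndicator T J s)^[k] _) k (fun l => by simp) (fun m _ => ?_)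
    fun m _ => (Function.iterate_succ_apply' _ _ _).ge
  simpa only [Nat.cast_succ, add_mul, one_mul, neg_add] using
    le_addIndicator hmono hhom hmax h0 (m * (α + s)) (by positivity : 0 ≤ (m : ℝ) * s)

end Bounds

theorem le_of_tendsto_div_natCast {u : ℕ → ℝ} {lam b : ℝ}
    (h : Tendsto (fun k => u k / k) atTop (𝓝 lam)) (hu : ∀ k : ℕ, u k ≤ k * b) : lam ≤ b :=
  le_of_tendsto h <| eventually_atTop.2 ⟨1, fun k hk =>
    (div_le_iff₀ (Nat.cast_pos.2 hk)).2 ((hu k).trans_eq (mul_comm _ _))⟩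

theorem ge_of_tendsto_div_natCast {u : ℕ → ℝ} {lam b : ℝ}
    (h : Tendsto (fun k => u k / k) atTop (𝓝 lam)) (hu : ∀ k : ℕ, k * b ≤ u k) : b ≤ lam :=
  ge_of_tendsto h <| eventually_atTop.2 ⟨1, fun k hk =>
    (le_div_iff₀ (Nat.cast_pos.2 hk)).2 ((mul_comm _ _).trans_le (hu k))⟩

theorem stmt8_general (n : ℕ)
    (T : (Fin n → ℝ) → (Fin n → ℝ))
    (hmono : Monotone T) (hhom : AddHomog n T)
    (I J : Set (Fin n)) (hI : I.Nonempty) (hJ : J.Nonempty) (hIJ : Disjoint I J)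
    (α β : ℝ)
    (hmin : ∀ i ∈ I, ∀ t : ℝ, 0 ≤ t → T (Iᶜ.indicator fun _ => t) i ≤ β)
    (hmax : ∀ j ∈ J, ∀ t : ℝ, 0 ≤ t → α ≤ T (Jᶜ.indicator fun _ => -t) j)
    (h0 : ∀ l : Fin n, α ≤ T (fun _ => 0) l ∧ T (fun _ => 0) l ≤ β)
    (s : ℝ) (hs : β - α < s) :
    ¬ ∃ lam : ℝ, ∀ i : Fin n,
        Filter.Tendsto
          (fun k : ℕ =>
            ((fun x => fun j => J.indicator (fun _ => s) j + T x j)^[k] (fun _ => 0)) i / k)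
          Filter.atTop (nhds lam) := by
  rintro ⟨lam, hlam⟩
  obtain ⟨i, hi⟩ := hI
  obtain ⟨j, hj⟩ := hJ
  have hs0 : 0 ≤ s := by linarith [h0 i]
  have hupper : ∀ k : ℕ, (addIndicator T J s)^[k] (fun _ => 0) i ≤ k * β := fun k => by
    simpa [hi] using addIndicator_iterate_le hmono hhom hIJ hmin (fun l => (h0 l).2) hs0 k i
  have hlower : ∀ k : ℕ, k * (α + s) ≤ (addIndicator T J s)^[k] (fun _ => 0) j := fun k => by
    simpa [hj] using le_addIndicator_iterate hmono hhom hmax (fun l => (h0 l).1) hs0 k j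
  linarith [le_of_tendsto_div_natCast (hlam i) hupper, ge_of_tendsto_div_natCast (hlam j) hlower]

theorem stmt8 (n : ℕ) (hn : 1 ≤ n)
    (T : (Fin n → ℝ) → (Fin n → ℝ))
    (hmono : Monotone T) (hhom : AddHomog n T)
    (I J : Set (Fin n)) (hI : I.Nonempty) (hJ : J.Nonempty) (hIJ : Disjoint I J)
    (α β : ℝ)
    (hmin : ∀ i ∈ I, ∀ t : ℝ, 0 ≤ t → T (Iᶜ.indicator fun _ => t) i ≤ β)
    (hmax : ∀ j ∈ J, ∀ t : ℝ, 0 ≤ t → α ≤ T (Jᶜ.indicator fun _ => -t) j)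
    (h0 : ∀ l : Fin n, α ≤ T (fun _ => 0) l ∧ T (fun _ => 0) l ≤ β)
    (s : ℝ) (hs : β - α < s) :
    ¬ ∃ lam : ℝ, ∀ i : Fin n,
        Filter.Tendsto
          (fun k : ℕ =>
            ((fun x => fun j => J.indicator (fun _ => s) j + T x j)^[k] (fun _ => 0)) i / k)
          Filter.atTop (nhds lam) :=
  stmt8_general n T hmono hhom I J hI hJ hIJ α β hmin hmax h0 s hs
end

section
/- Let n ≥ 1 and let T : ℝⁿ → ℝⁿ be monotone and additively homogeneous. Let i ∈ {1,…,n} and let I, J ⊆ {1,…,n} be disjoint sets. Then it is impossible that both of the following hold: the set {T_i(t·e_{Iᶜ}) : t ≥ 0} is bounded above, and the set {T_i(−t·e_{Jᶜ}) : t ≥ 0} is bounded below. -/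
theorem stmt9 (n : ℕ) (hn : 1 ≤ n)
    (T : (Fin n → ℝ) → (Fin n → ℝ))
    (hmono : Monotone T) (hhom : AddHomog n T)
    (i : Fin n) (I J : Set (Fin n)) (hIJ : Disjoint I J) :
    ¬ ((∃ C : ℝ, ∀ t : ℝ, 0 ≤ t → T (Iᶜ.indicator fun _ => t) i ≤ C) ∧
       (∃ c : ℝ, ∀ t : ℝ, 0 ≤ t → c ≤ T (Jᶜ.indicator fun _ => -t) i)) := by
  rintro ⟨⟨C, hC⟩, ⟨c, hc⟩⟩
  set t : ℝ := max 0 (C - c + 1) with ht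
  have ht0 : 0 ≤ t := le_max_left _ _
  have key : (fun j => Jᶜ.indicator (fun _ => -t) j + t) ≤ Iᶜ.indicator (fun _ => t) := by
    intro j
    by_cases hj : j ∈ Jᶜ
    · simp [Set.indicator_of_mem hj]
      by_cases hj' : j ∈ Iᶜ
      · simp [Set.indicator_of_mem hj', ht0]
      · simp [Set.indicator_of_notMem hj', ht0]
    · have hjJ : j ∈ J := not_not.mp hj
      have hjI : j ∈ Iᶜ := fun hjI => hIJ.ne_of_mem hjI hjJ rfl
      simp [Set.indicator_of_notMem hj, Set.indicator_of_mem hjI]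
  have h1 : T (Jᶜ.indicator fun _ => -t) i + t ≤ T (Iᶜ.indicator fun _ => t) i := by
    have := hmono key i
    rwa [hhom (Jᶜ.indicator fun _ => -t) t] at this
  have h2 : c + t ≤ C := by
    calc c + t ≤ T (Jᶜ.indicator fun _ => -t) i + t := by linarith [hc t ht0]
    _ ≤ T (Iᶜ.indicator fun _ => t) i := h1
    _ ≤ C := hC t ht0
  have : C - c + 1 ≤ t := le_max_right _ _
  linarith
end

section
/- Let n ≥ 1, let T : ℝⁿ → ℝⁿ be monotone and additively homogeneous, and let u ∈ ℝⁿ. Let i ∈ {1,…,n} and let I, J ⊆ {1,…,n} be disjoint sets. Then it is impossible that both of the following hold: there exists ε > 0 with T_i(u + t·e_{Iᶜ}) = T_i(u) for all t ∈ [0,ε], and there exists ε > 0 with T_i(u − t·e_{Jᶜ}) = T_i(u) for all t ∈ [0,ε]. -/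
theorem stmt10 (n : ℕ) (hn : 1 ≤ n)
    (T : (Fin n → ℝ) → (Fin n → ℝ))
    (hmono : Monotone T) (hhom : AddHomog n T)
    (u : Fin n → ℝ) (i : Fin n) (I J : Set (Fin n)) (hIJ : Disjoint I J) :
    ¬ ((∃ ε : ℝ, 0 < ε ∧ ∀ t : ℝ, 0 ≤ t → t ≤ ε →
          T (fun j => u j + Iᶜ.indicator (fun _ => t) j) i = T u i) ∧
       (∃ ε : ℝ, 0 < ε ∧ ∀ t : ℝ, 0 ≤ t → t ≤ ε →
          T (fun j => u j - Jᶜ.indicator (fun _ => t) j) i = T u i)) := by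
  rintro ⟨⟨ε₁, hε₁, h1⟩, ⟨ε₂, hε₂, h2⟩⟩
  set t := min ε₁ ε₂ with ht
  have htpos : 0 < t := lt_min hε₁ hε₂
  have e1 := h1 t htpos.le (min_le_left _ _)
  have e2 := h2 t htpos.le (min_le_right _ _)
  -- key inequality: (u - e_{Jᶜ} t) + t·e ≤ u + e_{Iᶜ} t
  have hle : (fun j => (u j - Jᶜ.indicator (fun _ => t) j) + t) ≤
      (fun j => u j + Iᶜ.indicator (fun _ => t) j) := by
    intro j
    by_cases hj : j ∈ Jᶜ
    · simp only [Set.indicator_of_mem hj]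
      have : (0:ℝ) ≤ Iᶜ.indicator (fun _ => t) j :=
        Set.indicator_nonneg (fun _ _ => htpos.le) j
      linarith
    · have hjJ : j ∈ J := not_not.mp hj
      have hjI : j ∈ Iᶜ := fun hjI => hIJ.ne_of_mem hjI hjJ rfl
      simp only [Set.indicator_of_notMem hj, Set.indicator_of_mem hjI]
      linarith
  have hkey := hmono hle i
  have hhomeq := congrFun (hhom (fun j => u j - Jᶜ.indicator (fun _ => t) j) t) i
  rw [hhomeq] at hkey
  rw [e1, e2] at hkey
  linarith
end

section
/- Let n ≥ 1, let T : ℝⁿ → ℝⁿ be monotone and additively homogeneous, and suppose T(u) = λ·e + u for some λ ∈ ℝ and u ∈ ℝⁿ. Then the following are equivalent: (a) for every μ ∈ ℝ and v ∈ ℝⁿ with T(v) = μ·e + v, the vector v − u is a scalar multiple of e; (b) there is no pair (I, J) of disjoint subsets of {1,…,n} such that I is a local MIN-dominion for T at u and J is a local MAX-dominion for T at u. -/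
/-- `Δ` is a local MIN-dominion for `T` at `u`: there is `ε > 0` with
`T_i(u + t·e_{Δᶜ}) = T_i(u)` for all `i ∈ Δ` and all `t ∈ [0, ε]`. -/
def LocalMinDominion (n : ℕ) (T : (Fin n → ℝ) → (Fin n → ℝ)) (u : Fin n → ℝ)
    (Δ : Set (Fin n)) : Prop :=
  Δ.Nonempty ∧ ∃ ε : ℝ, 0 < ε ∧ ∀ i ∈ Δ, ∀ t : ℝ, 0 ≤ t → t ≤ ε →
    T (fun j => u j + Δᶜ.indicator (fun _ => t) j) i = T u i

/-- `Δ` is a local MAX-dominion for `T` at `u`: there is `ε > 0` with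
`T_i(u − t·e_{Δᶜ}) = T_i(u)` for all `i ∈ Δ` and all `t ∈ [0, ε]`. -/
def LocalMaxDominion (n : ℕ) (T : (Fin n → ℝ) → (Fin n → ℝ)) (u : Fin n → ℝ)
    (Δ : Set (Fin n)) : Prop :=
  Δ.Nonempty ∧ ∃ ε : ℝ, 0 < ε ∧ ∀ i ∈ Δ, ∀ t : ℝ, 0 ≤ t → t ≤ ε →
    T (fun j => u j - Δᶜ.indicator (fun _ => t) j) i = T u i

private lemma step_le {n : ℕ} {T : (Fin n → ℝ) → (Fin n → ℝ)}
    (hmono : Monotone T) (hhom : AddHomog n T)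
    {x y : Fin n → ℝ} {c : ℝ} (h : ∀ i, x i ≤ y i + c) :
    ∀ i, T x i ≤ T y i + c := by
  intro i
  have h2 : T x ≤ T (fun j => y j + c) := hmono (fun j => h j)
  have h3 := h2 i
  rwa [hhom y c] at h3

/-- Hard direction: disjoint min/max dominions give a non-trivial eigenvector. -/
private lemma build_fixed
    (n : ℕ) (T : (Fin n → ℝ) → (Fin n → ℝ))
    (hmono : Monotone T) (hhom : AddHomog n T)
    (lam : ℝ) (u : Fin n → ℝ) (hu : T u = fun i => lam + u i)
    (I J : Set (Fin n)) (hdisj : Disjoint I J)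
    (hI : LocalMinDominion n T u I) (hJ : LocalMaxDominion n T u J) :
    ∃ v : Fin n → ℝ, T v = (fun i => lam + v i) ∧ ¬ ∃ c : ℝ, v - u = fun _ => c := by
  obtain ⟨hInem, ε1, hε1, hImin⟩ := hI
  obtain ⟨hJnem, ε2, hε2, hJmax⟩ := hJ
  set ε : ℝ := min ε1 ε2 with hεdef
  have hε : 0 < ε := lt_min hε1 hε2
  set f : (Fin n → ℝ) → (Fin n → ℝ) := fun x i => T x i - lam with hf
  have hfmono : Monotone f := fun x y h i => sub_le_sub_right (hmono h i) lam
  have hfu : f u = u := funext fun i => by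
    simp only [hf]; rw [congrFun hu i]; ring
  set top : Fin n → ℝ := fun j => u j + Iᶜ.indicator (fun _ => ε) j with htop
  set low : Fin n → ℝ := fun j => u j + J.indicator (fun _ => ε) j with hlow
  have hutop : u ≤ top := fun j => le_add_of_nonneg_right
    (Set.indicator_nonneg (fun _ _ => hε.le) j)
  have hulow : u ≤ low := fun j => le_add_of_nonneg_right
    (Set.indicator_nonneg (fun _ _ => hε.le) j)
  have htopI : ∀ i ∈ I, top i = u i := fun i hi => by
    simp [htop, Set.indicator_of_notMem (Set.notMem_compl_iff.mpr hi)]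
  have hlowJ : ∀ j ∈ J, low j = u j + ε := fun j hj => by
    simp [hlow, Set.indicator_of_mem hj]
  have hlowtop : low ≤ top := by
    intro j
    by_cases hj : j ∈ J
    · have hjI : j ∈ Iᶜ := fun hjI => hdisj.ne_of_mem hjI hj rfl
      simp [hlow, htop, Set.indicator_of_mem hj, Set.indicator_of_mem hjI]
    · simp only [hlow, htop, Set.indicator_of_notMem hj, add_zero]
      exact hutop j
  -- On I, f is frozen at u on the order interval [u, top].
  have hfixI : ∀ x, u ≤ x → x ≤ top → ∀ i ∈ I, f x i = u i := by
    intro x h1 h2 i hi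
    have hlo : u i ≤ f x i := by
      have := hfmono h1 i
      rwa [congrFun hfu i] at this
    have hhi : f x i ≤ u i := by
      have h3 : f x i ≤ f top i := hfmono h2 i
      have h4 : T top i = T u i :=
        hImin i hi ε (le_of_lt hε) (min_le_left _ _)
      have h5 : T u i = lam + u i := congrFun hu i
      simp only [hf] at h3 ⊢
      rw [h4, h5] at h3
      linarith
    linarith
  have hftop : f top ≤ top := by
    intro i
    by_cases hi : i ∈ I
    · rw [hfixI top hutop le_rfl i hi, htopI i hi]
    · have h1 : ∀ j, top j ≤ u j + ε := by
        intro j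
        by_cases hj : j ∈ Iᶜ
        · simp [htop, Set.indicator_of_mem hj]
        · simp only [htop, Set.indicator_of_notMem hj, add_zero]
          linarith [hε]
      have h2 := step_le hmono hhom h1 i
      have h5 : T u i = lam + u i := congrFun hu i
      simp only [hf, htop, Set.indicator_of_mem (Set.mem_compl hi)]
      rw [h5] at h2
      linarith
  -- f dominates `low` on [u, ∞) ∩ [low, ∞)
  have hflow : ∀ x, u ≤ x → low ≤ x → low ≤ f x := by
    intro x h1 h2 j
    by_cases hj : j ∈ J
    · have hkey : f low j = u j + ε := by
        have heq : low = fun i => (u i - Jᶜ.indicator (fun _ => ε) i) + ε := by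
          funext i
          by_cases hiJ : i ∈ J
          · simp [hlow, Set.indicator_of_mem hiJ,
              Set.indicator_of_notMem (Set.notMem_compl_iff.mpr hiJ)]
          · simp [hlow, Set.indicator_of_notMem hiJ,
              Set.indicator_of_mem (Set.mem_compl hiJ)]
      -- T low j = T (u - ε e_{Jᶜ}) j + ε = T u j + ε
        have h3 : T low = fun i =>
            T (fun i => u i - Jᶜ.indicator (fun _ => ε) i) i + ε := by
          rw [heq]; exact hhom _ ε
        have h4 : T (fun i => u i - Jᶜ.indicator (fun _ => ε) i) j = T u j :=
          hJmax j hj ε (le_of_lt hε) (min_le_right _ _)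
        have h5 : T u j = lam + u j := congrFun hu j
        simp only [hf, congrFun h3 j, h4, h5]; ring
      calc low j = f low j := by rw [hkey, hlowJ j hj]
        _ ≤ f x j := hfmono h2 j
    · have : u j ≤ f x j := by
        have := hfmono h1 j
        rwa [congrFun hfu j] at this
      simpa [hlow, Set.indicator_of_notMem hj] using this
  -- the iteration
  set w : ℕ → (Fin n → ℝ) := fun k => f^[k] top with hw
  have hw0 : w 0 = top := rfl
  have hwsucc : ∀ k, w (k + 1) = f (w k) := fun k =>
    Function.iterate_succ_apply' f k top
  have hQ : ∀ k, u ≤ w k ∧ low ≤ w k ∧ w k ≤ top := by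
    intro k
    induction k with
    | zero => exact ⟨hutop, hlowtop, le_rfl⟩
    | succ k ih =>
      obtain ⟨h1, h2, h3⟩ := ih
      refine ⟨?_, ?_, ?_⟩
      · rw [hwsucc]
        intro i
        have := hfmono h1 i
        rw [congrFun hfu i] at this
        exact this
      · rw [hwsucc]; exact hflow _ h1 h2
      · rw [hwsucc]
        exact le_trans (hfmono h3) hftop
  have hdec : ∀ k, w (k + 1) ≤ w k := by
    intro k
    induction k with
    | zero => rw [hwsucc, hw0]; exact hftop
    | succ k ih =>
      calc w (k + 1 + 1) = f (w (k + 1)) := hwsucc _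
        _ ≤ f (w k) := hfmono ih
        _ = w (k + 1) := (hwsucc k).symm
  have hanti : Antitone w := antitone_nat_of_succ_le hdec
  have hbdd : ∀ i, BddBelow (Set.range fun k => w k i) := by
    intro i
    exact ⟨u i, by rintro _ ⟨k, rfl⟩; exact (hQ k).1 i⟩
  set v : Fin n → ℝ := fun i => ⨅ k, w k i with hv
  have hvle : ∀ k, v ≤ w k := fun k i => ciInf_le (hbdd i) k
  have huv : u ≤ v := fun i => le_ciInf fun k => (hQ k).1 i
  have hlv : low ≤ v := fun i => le_ciInf fun k => (hQ k).2.1 i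
  have hvtop : v ≤ top := le_trans (hvle 0) (le_of_eq hw0)
  have hvI : ∀ i ∈ I, v i = u i := by
    intro i hi
    have h1 : v i ≤ u i := by
      have := hvle 0 i
      rwa [hw0, htopI i hi] at this
    exact le_antisymm h1 (huv i)
  have hfvle : f v ≤ v := by
    intro i
    refine le_ciInf fun k => ?_
    have h1 : f v i ≤ f (w k) i := hfmono (hvle k) i
    calc f v i ≤ f (w k) i := h1
      _ = w (k + 1) i := (congrFun (hwsucc k) i).symm
      _ ≤ w k i := hdec k i
  have hvlef : v ≤ f v := by
    intro i
    refine le_of_forall_pos_le_add ?_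
    intro δ hδ
    show v i ≤ T v i - lam + δ
    have hchoice : ∀ j, ∃ k, w k j < v j + δ := by
      intro j
      have : (⨅ k, w k j) < v j + δ := lt_add_of_pos_right _ hδ
      exact exists_lt_of_ciInf_lt this
    choose k hk using hchoice
    set K := Finset.univ.sup k with hK
    have hKj : ∀ j, w K j ≤ v j + δ := by
      intro j
      have h1 : k j ≤ K := Finset.le_sup (Finset.mem_univ j)
      exact le_trans (hanti h1 j) (hk j).le
    have h2 := step_le hmono hhom hKj i
    have h3 : v i ≤ w (K + 1) i := hvle (K + 1) i
    rw [hwsucc K] at h3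
    simp only [hf] at h3
    linarith
  have hfv : f v = v := le_antisymm hfvle hvlef
  refine ⟨v, ?_, ?_⟩
  · funext i
    have := congrFun hfv i
    simp only [hf] at this
    linarith
  · rintro ⟨c, hc⟩
    obtain ⟨i0, hi0⟩ := hInem
    obtain ⟨j0, hj0⟩ := hJnem
    have h1 : v i0 - u i0 = c := congrFun hc i0
    have h2 : v j0 - u j0 = c := congrFun hc j0
    rw [hvI i0 hi0] at h1
    have h3 : u j0 + ε ≤ v j0 := by
      have := hlv j0
      rwa [hlowJ j0 hj0] at this
    have : c = 0 := by linarith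
    linarith

/-- Easy direction: a non-trivial eigenvector gives disjoint dominions. -/
private lemma build_dominions
    (n : ℕ) (hn : 1 ≤ n) (T : (Fin n → ℝ) → (Fin n → ℝ))
    (hmono : Monotone T) (hhom : AddHomog n T)
    (lam : ℝ) (u : Fin n → ℝ) (hu : T u = fun i => lam + u i)
    (μ : ℝ) (v : Fin n → ℝ) (hv : T v = fun i => μ + v i)
    (hnc : ¬ ∃ c : ℝ, v - u = fun _ => c) :
    ∃ I J : Set (Fin n), Disjoint I J ∧
      LocalMinDominion n T u I ∧ LocalMaxDominion n T u J := by
  haveI : Nonempty (Fin n) := ⟨⟨0, hn⟩⟩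
  set d : Fin n → ℝ := fun i => v i - u i with hd
  obtain ⟨i0, -, hmin⟩ := Finset.exists_min_image Finset.univ d ⟨Classical.arbitrary _, Finset.mem_univ _⟩
  obtain ⟨j0, -, hmax⟩ := Finset.exists_max_image Finset.univ d ⟨Classical.arbitrary _, Finset.mem_univ _⟩
  set m := d i0 with hm
  set M := d j0 with hM
  have hmle : ∀ i, m ≤ d i := fun i => hmin i (Finset.mem_univ i)
  have hMge : ∀ i, d i ≤ M := fun i => hmax i (Finset.mem_univ i)
  have hmM : m < M := by
    by_contra h
    push_neg at h
    refine hnc ⟨m, funext fun i => ?_⟩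
    have h1 := hmle i
    have h2 := le_trans (hMge i) h
    have : d i = m := le_antisymm h2 h1
    simpa [hd] using this
  -- eigenvalue equality
  have hmul : μ = lam := by
    have hle1 : lam ≤ μ := by
      have h1 : ∀ i, u i ≤ v i + (-m) := by
        intro i
        have := hmle i
        simp only [hd] at this
        linarith
      have h2 := step_le hmono hhom h1 i0
      rw [congrFun hu i0, congrFun hv i0] at h2
      have : v i0 = u i0 + m := by simp only [hm, hd]; ring
      rw [this] at h2
      linarith
    have hle2 : μ ≤ lam := by
      have h1 : ∀ i, v i ≤ u i + M := by
        intro i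
        have := hMge i
        simp only [hd] at this
        linarith
      have h2 := step_le hmono hhom h1 j0
      rw [congrFun hu j0, congrFun hv j0] at h2
      have : v j0 = u j0 + M := by simp only [hM, hd]; ring
      rw [this] at h2
      linarith
    linarith
  set I : Set (Fin n) := {i | d i = m} with hI
  set J : Set (Fin n) := {i | d i = M} with hJ
  have hdisj : Disjoint I J := by
    rw [Set.disjoint_left]
    intro i hiI hiJ
    simp only [hI, hJ, Set.mem_setOf_eq] at hiI hiJ
    rw [hiI] at hiJ
    exact absurd hiJ (ne_of_lt hmM)
  refine ⟨I, J, hdisj, ⟨⟨i0, rfl⟩, ?_⟩, ⟨⟨j0, rfl⟩, ?_⟩⟩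
  -- MIN dominion: I = argmin of d
  · have hSne : (Finset.univ.filter fun j => d j ≠ m).Nonempty := by
      refine ⟨j0, Finset.mem_filter.mpr ⟨Finset.mem_univ _, ?_⟩⟩
      exact ne_of_gt hmM
    obtain ⟨j1, hj1mem, hj1⟩ := Finset.exists_min_image _ d hSne
    have hj1ne : d j1 ≠ m := (Finset.mem_filter.mp hj1mem).2
    have hεpos : 0 < d j1 - m :=
      sub_pos.mpr (lt_of_le_of_ne (hmle j1) (Ne.symm hj1ne))
    refine ⟨d j1 - m, hεpos, ?_⟩
    intro i hi t ht0 htε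
    have hiI : d i = m := hi
    have hle1 : u ≤ fun j => u j + Iᶜ.indicator (fun _ => t) j :=
      fun j => le_add_of_nonneg_right (Set.indicator_nonneg (fun _ _ => ht0) j)
    have hle2 : (fun j => u j + Iᶜ.indicator (fun _ => t) j) ≤ fun j => v j + (-m) := by
      intro j
      by_cases hj : j ∈ I
      · have hjm : d j = m := hj
        simp only [Set.indicator_of_notMem (Set.notMem_compl_iff.mpr hj), add_zero]
        simp only [hd] at hjm
        linarith
      · have hjm : d j ≠ m := hj
        have hjS : j ∈ Finset.univ.filter fun j => d j ≠ m :=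
          Finset.mem_filter.mpr ⟨Finset.mem_univ _, hjm⟩
        have h1 := hj1 j hjS
        simp only [Set.indicator_of_mem (Set.mem_compl hj)]
        have : d j = v j - u j := rfl
        linarith
    have h1 := hmono hle1 i
    have h2 := hmono hle2 i
    rw [hhom v (-m)] at h2
    have h2' : T (fun j => u j + Iᶜ.indicator (fun _ => t) j) i ≤ T v i + -m := h2
    rw [congrFun hv i] at h2'
    have hvi : v i = u i + m := by
      simp only [hd] at hiI; linarith
    rw [congrFun hu i] at h1
    rw [congrFun hu i]
    rw [hvi, hmul] at h2'
    linarith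
  -- MAX dominion: J = argmax of d
  · have hSne : (Finset.univ.filter fun j => d j ≠ M).Nonempty := by
      refine ⟨i0, Finset.mem_filter.mpr ⟨Finset.mem_univ _, ?_⟩⟩
      exact ne_of_lt hmM
    obtain ⟨j2, hj2mem, hj2⟩ := Finset.exists_max_image _ d hSne
    have hj2ne : d j2 ≠ M := (Finset.mem_filter.mp hj2mem).2
    have hεpos : 0 < M - d j2 :=
      sub_pos.mpr (lt_of_le_of_ne (hMge j2) hj2ne)
    refine ⟨M - d j2, hεpos, ?_⟩
    intro i hi t ht0 htε
    have hiJ : d i = M := hi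
    have hle1 : (fun j => u j - Jᶜ.indicator (fun _ => t) j) ≤ u :=
      fun j => sub_le_self _ (Set.indicator_nonneg (fun _ _ => ht0) j)
    have hle2 : (fun j => v j + (-M)) ≤ fun j => u j - Jᶜ.indicator (fun _ => t) j := by
      intro j
      by_cases hj : j ∈ J
      · have hjm : d j = M := hj
        simp only [Set.indicator_of_notMem (Set.notMem_compl_iff.mpr hj), sub_zero]
        simp only [hd] at hjm
        linarith
      · have hjm : d j ≠ M := hj
        have hjS : j ∈ Finset.univ.filter fun j => d j ≠ M :=
          Finset.mem_filter.mpr ⟨Finset.mem_univ _, hjm⟩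
        have h1 := hj2 j hjS
        simp only [Set.indicator_of_mem (Set.mem_compl hj)]
        have : d j = v j - u j := rfl
        linarith
    have h1 := hmono hle1 i
    have h2 := hmono hle2 i
    rw [hhom v (-M)] at h2
    have h2' : T v i + -M ≤ T (fun j => u j - Jᶜ.indicator (fun _ => t) j) i := h2
    rw [congrFun hv i] at h2'
    have hvi : v i = u i + M := by
      simp only [hd] at hiJ; linarith
    rw [congrFun hu i] at h1
    rw [congrFun hu i]
    rw [hvi, hmul] at h2'
    linarith

theorem stmt11 (n : ℕ) (hn : 1 ≤ n)
    (T : (Fin n → ℝ) → (Fin n → ℝ))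
    (hmono : Monotone T) (hhom : AddHomog n T)
    (lam : ℝ) (u : Fin n → ℝ) (hu : T u = fun i => lam + u i) :
    (∀ (μ : ℝ) (v : Fin n → ℝ), T v = (fun i => μ + v i) →
        ∃ c : ℝ, v - u = fun _ => c) ↔
    (¬ ∃ I J : Set (Fin n), Disjoint I J ∧
        LocalMinDominion n T u I ∧ LocalMaxDominion n T u J) := by
  constructor
  · intro h
    rintro ⟨I, J, hdisj, hI, hJ⟩
    obtain ⟨v, hv, hnc⟩ := build_fixed n T hmono hhom lam u hu I J hdisj hI hJ
    exact hnc (h lam v hv)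
  · intro h μ v hv
    by_contra hnc
    exact h (build_dominions n hn T hmono hhom lam u hu μ v hv hnc)
end

section
/- Let n ≥ 1, let T : ℝⁿ → ℝⁿ be monotone and additively homogeneous, and suppose T(u) = λ·e + u and T(v) = λ·e + v for some λ ∈ ℝ and u, v ∈ ℝⁿ such that v − u is not a scalar multiple of e. Set I = {i : (v−u)_i = min_ℓ (v−u)_ℓ} and J = {j : (v−u)_j = max_ℓ (v−u)_ℓ}. Then I is a local MIN-dominion for T at u, J is a local MAX-dominion for T at u, and I ∩ J = ∅. -/
theorem stmt12 (n : ℕ) (hn : 1 ≤ n)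
    (T : (Fin n → ℝ) → (Fin n → ℝ))
    (hmono : Monotone T) (hhom : AddHomog n T)
    (lam : ℝ) (u v : Fin n → ℝ)
    (hu : T u = fun i => lam + u i) (hv : T v = fun i => lam + v i)
    (hnc : ¬ ∃ c : ℝ, v - u = fun _ => c) :
    LocalMinDominion n T u {i | ∀ l, v i - u i ≤ v l - u l} ∧
    LocalMaxDominion n T u {j | ∀ l, v l - u l ≤ v j - u j} ∧
    Disjoint {i | ∀ l, v i - u i ≤ v l - u l} {j | ∀ l, v l - u l ≤ v j - u j} := by
  have hne : Nonempty (Fin n) := ⟨⟨0, hn⟩⟩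
  obtain ⟨i0, hi0⟩ := Finite.exists_min (fun i => v i - u i)
  obtain ⟨j0, hj0⟩ := Finite.exists_max (fun i => v i - u i)
  have hlt : v i0 - u i0 < v j0 - u j0 := by
    rcases lt_or_ge (v i0 - u i0) (v j0 - u j0) with h | h
    · exact h
    · exfalso; apply hnc
      refine ⟨v i0 - u i0, funext fun l => ?_⟩
      have h1 := hi0 l; have h2 := hj0 l
      simp only [Pi.sub_apply]
      linarith
  have hsub : ∀ (x : Fin n → ℝ) (c : ℝ), T (fun l => x l - c) = fun l => T x l - c := by
    intro x c
    have := hhom x (-c)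
    simpa [sub_eq_add_neg] using this
  refine ⟨?_, ?_, ?_⟩
  · -- MIN dominion
    refine ⟨⟨i0, hi0⟩, ?_⟩
    set I : Set (Fin n) := {i | ∀ l, v i - u i ≤ v l - u l} with hI
    set S : Finset (Fin n) := Finset.univ.filter (fun l => v i0 - u i0 < v l - u l) with hS
    have hSne : (S.image (fun l => (v l - u l) - (v i0 - u i0))).Nonempty :=
      ⟨_, Finset.mem_image_of_mem _ (show j0 ∈ S by simp [hS, hlt])⟩
    set ε : ℝ := (S.image (fun l => (v l - u l) - (v i0 - u i0))).min' hSne with hε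
    have hεle : ∀ l ∈ S, ε ≤ (v l - u l) - (v i0 - u i0) := fun l hl =>
      Finset.min'_le _ _ (Finset.mem_image_of_mem _ hl)
    have hεpos : 0 < ε := by
      obtain ⟨l, hl, hl2⟩ := Finset.mem_image.mp (Finset.min'_mem _ hSne)
      rw [hS, Finset.mem_filter] at hl
      rw [hε, ← hl2]
      linarith [hl.2]
    refine ⟨ε, hεpos, ?_⟩
    intro i hi t ht0 htε
    have hieq : v i - u i = v i0 - u i0 := le_antisymm (hi i0) (hi0 i)
    apply le_antisymm
    · -- upper bound: u + t·ind ≤ v - (v i0 - u i0)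
      have hle : (fun j => u j + Iᶜ.indicator (fun _ => t) j) ≤
          (fun l => v l - (v i0 - u i0)) := by
        intro j
        by_cases hj : j ∈ I
        · have : Iᶜ.indicator (fun _ => t) j = 0 := Set.indicator_of_notMem (by simpa) _
          have hjeq : v j - u j = v i0 - u i0 := le_antisymm (hj i0) (hi0 j)
          simp only [this]
          linarith
        · have hind : Iᶜ.indicator (fun _ => t) j = t := Set.indicator_of_mem (show j ∈ Iᶜ from hj) _
          have hjS : j ∈ S := by
            rw [hI, Set.mem_setOf_eq] at hj
            push_neg at hj
            obtain ⟨l, hl⟩ := hj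
            rw [hS, Finset.mem_filter]
            exact ⟨Finset.mem_univ _, lt_of_le_of_lt (hi0 l) hl⟩
          have := hεle j hjS
          simp only [hind]
          linarith
      calc T (fun j => u j + Iᶜ.indicator (fun _ => t) j) i
          ≤ T (fun l => v l - (v i0 - u i0)) i := hmono hle i
        _ = T v i - (v i0 - u i0) := by rw [hsub]
        _ = T u i := by
            rw [congrFun hu i, congrFun hv i]
            linarith [hieq]
    · -- lower bound
      apply hmono (fun j => ?_) i
      have : 0 ≤ Iᶜ.indicator (fun _ => t) j := Set.indicator_nonneg (fun _ _ => ht0) _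
      simp only
      linarith
  · -- MAX dominion
    refine ⟨⟨j0, hj0⟩, ?_⟩
    set J : Set (Fin n) := {j | ∀ l, v l - u l ≤ v j - u j} with hJ
    set S : Finset (Fin n) := Finset.univ.filter (fun l => v l - u l < v j0 - u j0) with hS
    have hSne : (S.image (fun l => (v j0 - u j0) - (v l - u l))).Nonempty :=
      ⟨_, Finset.mem_image_of_mem _ (show i0 ∈ S by simp [hS, hlt])⟩
    set ε : ℝ := (S.image (fun l => (v j0 - u j0) - (v l - u l))).min' hSne with hε
    have hεle : ∀ l ∈ S, ε ≤ (v j0 - u j0) - (v l - u l) := fun l hl =>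
      Finset.min'_le _ _ (Finset.mem_image_of_mem _ hl)
    have hεpos : 0 < ε := by
      obtain ⟨l, hl, hl2⟩ := Finset.mem_image.mp (Finset.min'_mem _ hSne)
      rw [hS, Finset.mem_filter] at hl
      rw [hε, ← hl2]
      linarith [hl.2]
    refine ⟨ε, hεpos, ?_⟩
    intro j hj t ht0 htε
    have hjeq : v j - u j = v j0 - u j0 := le_antisymm (hj0 j) (hj j0)
    apply le_antisymm
    · -- upper bound
      apply hmono (fun l => ?_) j
      have : 0 ≤ Jᶜ.indicator (fun _ => t) l := Set.indicator_nonneg (fun _ _ => ht0) _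
      simp only
      linarith
    · -- lower bound: v - (v j0 - u j0) ≤ u - t·ind
      have hle : (fun l => v l - (v j0 - u j0)) ≤
          (fun l => u l - Jᶜ.indicator (fun _ => t) l) := by
        intro l
        by_cases hl : l ∈ J
        · have : Jᶜ.indicator (fun _ => t) l = 0 := Set.indicator_of_notMem (by simpa) _
          have hleq : v l - u l = v j0 - u j0 := le_antisymm (hj0 l) (hl j0)
          simp only [this]
          linarith
        · have hind : Jᶜ.indicator (fun _ => t) l = t := Set.indicator_of_mem (show l ∈ Jᶜ from hl) _
          have hlS : l ∈ S := by
            rw [hJ, Set.mem_setOf_eq] at hl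
            push_neg at hl
            obtain ⟨m, hm⟩ := hl
            rw [hS, Finset.mem_filter]
            exact ⟨Finset.mem_univ _, lt_of_lt_of_le hm (hj0 m)⟩
          have := hεle l hlS
          simp only [hind]
          linarith
      calc T u j = T v j - (v j0 - u j0) := by
            rw [congrFun hu j, congrFun hv j]; linarith [hjeq]
        _ = T (fun l => v l - (v j0 - u j0)) j := by rw [hsub]
        _ ≤ T (fun l => u l - Jᶜ.indicator (fun _ => t) l) j := hmono hle j
  · -- disjoint
    rw [Set.disjoint_left]
    intro i h1 h2
    apply hnc
    refine ⟨v i - u i, funext fun l => ?_⟩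
    have := h1 l
    have := h2 l
    simp only [Pi.sub_apply]
    linarith
end
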